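/- arXiv:1806.04679 — 6 statements merged into one kernel-verified Lean document; each statement's English description precedes it below -/
import Mathlib

section
/- Classical transfer for connected sums: let r ≥ 0 and s > 0 be integers and k_1, ..., k_r, l_1, ..., l_s positive integers. Then the classical connected sums (as values in [0, +∞]) satisfy Z(k_1, ..., k_r, 1; l_1, ..., l_s) = Z(k_1, ..., k_r; l_1, ..., l_{s-1}, l_s + 1). -/
open scoped ENNReal

noncomputable section

/-- Strictly increasing `r`-tuples of positive integers
`0 = m₀ < m₁ < ⋯ < m_r`. -/
def StrictTup (r : ℕ) : Type := {m : Fin r → ℕ // StrictMono m ∧ ∀ i, 0 < m i}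

/-- The `q`-integer `[m]_q = (1 - q^m)/(1 - q)`. -/
def qint (q : ℝ) (m : ℕ) : ℝ := (1 - q ^ m) / (1 - q)

/-- `f_q(m; x) = ∏_{h=1}^m ([h]_q - q^h x)` (empty product = 1). -/
def fq (q x : ℝ) (m : ℕ) : ℝ := ∏ h ∈ Finset.Icc 1 m, (qint q h - q ^ h * x)

/-- The last entry of a tuple, or `0` for the empty tuple (i.e. `m_r`, with `m_0 = 0`). -/
def lastOr0 {r : ℕ} (m : Fin r → ℕ) : ℕ :=
  if h : 0 < r then m ⟨r - 1, by omega⟩ else 0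

/-- The multiple zeta value `ζ(k) = ∑_{0<m₁<⋯<m_r} ∏ 1/m_i^{k_i}`, as a value in `[0,∞]`. -/
def mzeta (k : List ℕ) : ℝ≥0∞ :=
  ∑' m : StrictTup k.length, ∏ i, 1 / (m.1 i : ℝ≥0∞) ^ k.get i

/-- The `q`-multiple zeta value
`ζ_q(k) = ∑_{0<m₁<⋯<m_r} ∏ q^{(k_i-1)m_i}/[m_i]_q^{k_i}`, as a value in `[0,∞]`. -/
def qmzeta (q : ℝ) (k : List ℕ) : ℝ≥0∞ :=
  ∑' m : StrictTup k.length,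
    ENNReal.ofReal (∏ i, q ^ ((k.get i - 1) * m.1 i) / qint q (m.1 i) ^ k.get i)

/-- The summand `∏_i q^{(k_i-1)m_i} / (([m_i]_q - q^{m_i}x) [m_i]_q^{k_i-1})`. -/
def ZqTerm (q x : ℝ) (k : List ℕ) (m : Fin k.length → ℕ) : ℝ :=
  ∏ i, q ^ ((k.get i - 1) * m i) /
    ((qint q (m i) - q ^ (m i) * x) * qint q (m i) ^ (k.get i - 1))

/-- The connected sum `Z_q(k; l; x)`, as a value in `[0,∞]`. -/
def connSum (q x : ℝ) (k l : List ℕ) : ℝ≥0∞ :=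
  ∑' p : StrictTup k.length × StrictTup l.length,
    ENNReal.ofReal (ZqTerm q x k p.1.1 * ZqTerm q x l p.2.1 *
      (q ^ (lastOr0 p.1.1 * lastOr0 p.2.1) * fq q x (lastOr0 p.1.1) *
        fq q x (lastOr0 p.2.1) / fq q x (lastOr0 p.1.1 + lastOr0 p.2.1)))

/-- The one-variable generating series
`Z_q(k; x) = ∑_{0<m₁<⋯<m_r} ∏ q^{(k_i-1)m_i}/(([m_i]_q - q^{m_i}x)[m_i]_q^{k_i-1})`,
as a value in `[0,∞]`. -/
def Zq1 (q x : ℝ) (k : List ℕ) : ℝ≥0∞ :=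
  ∑' m : StrictTup k.length, ENNReal.ofReal (ZqTerm q x k m.1)

/-- The classical connected sum `Z(k; l)`, as a value in `[0,∞]`. -/
def connSumC (k l : List ℕ) : ℝ≥0∞ :=
  ∑' p : StrictTup k.length × StrictTup l.length,
    (∏ i, 1 / (p.1.1 i : ℝ≥0∞) ^ k.get i) * (∏ j, 1 / (p.2.1 j : ℝ≥0∞) ^ l.get j) *
      ((Nat.factorial (lastOr0 p.1.1) : ℝ≥0∞) * (Nat.factorial (lastOr0 p.2.1)) /
        (Nat.factorial (lastOr0 p.1.1 + lastOr0 p.2.1)))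

/-- The admissible index `({1}^{a₁-1}, b₁+1, …, {1}^{a_s-1}, b_s+1)` built from the
list of pairs `ab = [(a₁,b₁),…,(a_s,b_s)]`. -/
def indexFromAB (ab : List (ℕ × ℕ)) : List ℕ :=
  ab.flatMap fun p => List.replicate (p.1 - 1) 1 ++ [p.2 + 1]

/-- The dual index `({1}^{b_s-1}, a_s+1, …, {1}^{b₁-1}, a₁+1)` built from
`ab = [(a₁,b₁),…,(a_s,b_s)]`. -/
def dualFromAB (ab : List (ℕ × ℕ)) : List ℕ :=
  ab.reverse.flatMap fun p => List.replicate (p.2 - 1) 1 ++ [p.1 + 1]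

namespace ConnAux
open Filter



/-- `c N a = a! N! / (a+N)!` -/
def c (N a : ℕ) : ℝ := a.factorial * N.factorial / (a + N).factorial

lemma c_nonneg (N a : ℕ) : 0 ≤ c N a := by unfold c; positivity

lemma c_step (N b : ℕ) (hN : 0 < N) :
    (1 / ((b : ℝ) + 1)) * c N (b + 1) = (1 / N) * (c N b - c N (b + 1)) := by
  have h1 : (b + 1 + N).factorial = (b + N + 1) * (b + N).factorial := by
    rw [show b + 1 + N = (b + N) + 1 by omega, Nat.factorial_succ]
  have h2 : (b + 1).factorial = (b + 1) * b.factorial := Nat.factorial_succ b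
  have hN' : (N : ℝ) ≠ 0 := Nat.cast_ne_zero.mpr hN.ne'
  have hf1 : ((b + N).factorial : ℝ) ≠ 0 := Nat.cast_ne_zero.mpr (Nat.factorial_ne_zero _)
  have hb1 : ((b : ℝ) + 1) ≠ 0 := by positivity
  have hbN1 : ((b : ℝ) + N + 1) ≠ 0 := by positivity
  unfold c
  rw [h1, h2]
  push_cast
  field_simp
  ring

lemma c_le (N a : ℕ) (hN : 0 < N) : c N a ≤ (N.factorial : ℝ) / ((a : ℝ) + 1) := by
  have key : a.factorial * N.factorial * (a + 1) ≤ N.factorial * (a + N).factorial := by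
    calc a.factorial * N.factorial * (a + 1) = N.factorial * ((a + 1) * a.factorial) := by ring
    _ = N.factorial * (a + 1).factorial := by rw [← Nat.factorial_succ]
    _ ≤ N.factorial * (a + N).factorial :=
        Nat.mul_le_mul_left _ (Nat.factorial_le (by omega))
  unfold c
  rw [div_le_div_iff₀ (by positivity) (by positivity)]
  calc (a.factorial : ℝ) * N.factorial * ((a : ℝ) + 1)
      = ((a.factorial * N.factorial * (a + 1) : ℕ) : ℝ) := by push_cast; ring
    _ ≤ ((N.factorial * (a + N).factorial : ℕ) : ℝ) := by exact_mod_cast key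
    _ = (N.factorial : ℝ) * ((a + N).factorial : ℝ) := by push_cast; ring

lemma c_tendsto (N : ℕ) (hN : 0 < N) : Tendsto (c N) atTop (nhds 0) := by
  apply squeeze_zero (c_nonneg N) (fun a => c_le N a hN)
  have h := (tendsto_const_div_atTop_nhds_zero_nat (N.factorial : ℝ)).comp
    (Filter.tendsto_add_atTop_nat 1)
  refine h.congr fun a => ?_
  simp [Function.comp]

lemma partial_sum (M N : ℕ) (hN : 0 < N) (K : ℕ) :
    ∑ i ∈ Finset.range (M + 1 + K),
        Set.indicator {a : ℕ | M < a} (fun a => (1 / (a : ℝ)) * c N a) i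
      = (1 / N) * (c N M - c N (M + K)) := by
  induction K with
  | zero =>
    rw [Finset.sum_eq_zero]
    · simp
    · intro i hi
      rw [Finset.mem_range] at hi
      exact Set.indicator_of_notMem (by simp; omega) _
  | succ K ih =>
    rw [show M + 1 + (K + 1) = (M + 1 + K) + 1 by omega, Finset.sum_range_succ, ih,
      Set.indicator_of_mem (by simp; omega)]
    have hstep := c_step N (M + K) hN
    have hcast : ((M + 1 + K : ℕ) : ℝ) = ((M + K : ℕ) : ℝ) + 1 := by push_cast; ring
    rw [show M + 1 + K = (M + K) + 1 by omega]
    push_cast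
    push_cast at hstep
    rw [show M + (K + 1) = (M + K) + 1 by omega]
    push_cast
    linarith [hstep]

lemma key_hasSum (M N : ℕ) (hN : 0 < N) :
    HasSum (fun a : {a : ℕ // M < a} => (1 / (a.1 : ℝ)) * c N a.1) ((1 / N) * c N M) := by
  have hind : HasSum (Set.indicator {a : ℕ | M < a} (fun a => (1 / (a : ℝ)) * c N a))
      ((1 / N) * c N M) := by
    have hnon : ∀ i : ℕ,
        0 ≤ Set.indicator {a : ℕ | M < a} (fun a => (1 / (a : ℝ)) * c N a) i := by
      intro i
      apply Set.indicator_nonneg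
      intro a _
      have := c_nonneg N a
      positivity
    rw [hasSum_iff_tendsto_nat_of_nonneg hnon]
    have h1 : Tendsto (fun n : ℕ => (1 / (N : ℝ)) * (c N M - c N (M + (n - (M + 1)))))
        atTop (nhds ((1 / N) * (c N M - 0))) := by
      apply Tendsto.const_mul
      apply Tendsto.const_sub
      apply (c_tendsto N hN).comp
      apply tendsto_atTop_atTop_of_monotone
      · intro x y hxy
        show M + (x - (M + 1)) ≤ M + (y - (M + 1))
        omega
      · intro b
        refine ⟨b + M + 1, ?_⟩
        show b ≤ M + (b + M + 1 - (M + 1))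
        omega
    rw [sub_zero] at h1
    refine h1.congr' ?_
    filter_upwards [eventually_ge_atTop (M + 1)] with n hn
    obtain ⟨K, rfl⟩ : ∃ K, n = M + 1 + K := ⟨n - (M + 1), by omega⟩
    rw [partial_sum M N hN K]
    congr 3
    omega
  exact hasSum_subtype_iff_indicator.mpr hind

lemma natdiv (p q : ℕ) (hq : q ≠ 0) : (p : ℝ≥0∞) / q = ENNReal.ofReal ((p : ℝ) / q) := by
  rw [ENNReal.ofReal_div_of_pos (by exact_mod_cast Nat.pos_of_ne_zero hq),
    ENNReal.ofReal_natCast, ENNReal.ofReal_natCast]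

lemma term_eq (d M N : ℕ) (hd : 0 < d) :
    (1 / (d : ℝ≥0∞)) * ((M.factorial : ℝ≥0∞) * N.factorial / ((M + N).factorial : ℕ))
      = ENNReal.ofReal ((1 / (d : ℝ)) * c N M) := by
  rw [ENNReal.ofReal_mul (by positivity)]
  congr 1
  · rw [show ((1 : ℝ) / (d : ℝ)) = ((1 : ℕ) : ℝ) / ((d : ℕ) : ℝ) by norm_num,
      ← natdiv 1 d hd.ne']
    simp
  · unfold c
    rw [show ((M.factorial : ℝ≥0∞) * N.factorial) = ((M.factorial * N.factorial : ℕ) : ℝ≥0∞)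
        by push_cast; ring,
      natdiv _ _ (Nat.factorial_ne_zero _)]
    congr 1
    push_cast
    ring

lemma key_ennreal (M N : ℕ) (hN : 0 < N) :
    (∑' a : {a : ℕ // M < a},
        (1 / (a.1 : ℝ≥0∞)) * ((a.1.factorial : ℝ≥0∞) * N.factorial / ((a.1 + N).factorial : ℕ)))
      = (1 / (N : ℝ≥0∞)) * ((M.factorial : ℝ≥0∞) * N.factorial / ((M + N).factorial : ℕ)) := by
  have hsum := key_hasSum M N hN
  have hnon : ∀ a : {a : ℕ // M < a}, 0 ≤ (1 / (a.1 : ℝ)) * c N a.1 := fun a => by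
    have := c_nonneg N a.1
    positivity
  calc (∑' a : {a : ℕ // M < a},
        (1 / (a.1 : ℝ≥0∞)) * ((a.1.factorial : ℝ≥0∞) * N.factorial / ((a.1 + N).factorial : ℕ)))
      = ∑' a : {a : ℕ // M < a}, ENNReal.ofReal ((1 / (a.1 : ℝ)) * c N a.1) :=
        tsum_congr fun a => term_eq a.1 a.1 N (lt_of_le_of_lt (Nat.zero_le M) a.2)
    _ = ENNReal.ofReal (∑' a : {a : ℕ // M < a}, (1 / (a.1 : ℝ)) * c N a.1) :=
        (ENNReal.ofReal_tsum_of_nonneg hnon hsum.summable).symm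
    _ = ENNReal.ofReal ((1 / N) * c N M) := by rw [hsum.tsum_eq]
    _ = (1 / (N : ℝ≥0∞)) * ((M.factorial : ℝ≥0∞) * N.factorial / ((M + N).factorial : ℕ)) :=
        (term_eq N M N hN).symm

/- ## the snoc equivalence -/

lemma le_lastOr0 {r : ℕ} {m : Fin r → ℕ} (hm : StrictMono m) (i : Fin r) :
    m i ≤ lastOr0 m := by
  have hr : 0 < r := i.pos
  have hi := i.isLt
  rw [lastOr0, dif_pos hr]
  exact hm.monotone (by rw [Fin.le_def]; simp; omega)

def snocTup {r : ℕ} (m : StrictTup r) (a : {a : ℕ // lastOr0 m.1 < a}) : StrictTup (r + 1) :=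
  ⟨fun i => if h : (i : ℕ) < r then m.1 ⟨i, h⟩ else a.1, by
    constructor
    · intro i j hij
      rw [Fin.lt_def] at hij
      by_cases hi : (i : ℕ) < r
      · by_cases hj : (j : ℕ) < r
        · simp only [dif_pos hi, dif_pos hj]
          exact m.2.1 (show ((⟨(i : ℕ), hi⟩ : Fin r) < ⟨(j : ℕ), hj⟩) from hij)
        · simp only [dif_pos hi, dif_neg hj]
          exact lt_of_le_of_lt (le_lastOr0 m.2.1 _) a.2
      · exfalso
        have := i.isLt
        have := j.isLt
        omega
    · intro i
      by_cases hi : (i : ℕ) < r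
      · simp only [dif_pos hi]; exact m.2.2 _
      · simp only [dif_neg hi]; exact lt_of_le_of_lt (Nat.zero_le _) a.2⟩

lemma snoc_castSucc {r : ℕ} (m : StrictTup r) (a : {a : ℕ // lastOr0 m.1 < a}) (i : Fin r) :
    (snocTup m a).1 i.castSucc = m.1 i := by
  show (if h : ((i.castSucc : Fin (r + 1)) : ℕ) < r then m.1 ⟨_, h⟩ else a.1) = m.1 i
  rw [dif_pos (show ((i.castSucc : Fin (r + 1)) : ℕ) < r by simp)]
  exact congrArg m.1 (Fin.ext (by simp))

lemma snoc_last {r : ℕ} (m : StrictTup r) (a : {a : ℕ // lastOr0 m.1 < a}) :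
    (snocTup m a).1 (Fin.last r) = a.1 := by
  show (if h : ((Fin.last r : Fin (r + 1)) : ℕ) < r then m.1 ⟨_, h⟩ else a.1) = a.1
  rw [dif_neg (by simp)]

lemma lastOr0_snoc {r : ℕ} (m : StrictTup r) (a : {a : ℕ // lastOr0 m.1 < a}) :
    lastOr0 (snocTup m a).1 = a.1 := by
  rw [lastOr0, dif_pos (Nat.succ_pos r)]
  show (if h : ((⟨r + 1 - 1, _⟩ : Fin (r + 1)) : ℕ) < r then m.1 ⟨_, h⟩ else a.1) = a.1
  rw [dif_neg (by simp)]

lemma lastOr0_pos {s : ℕ} (n : StrictTup (s + 1)) : 0 < lastOr0 n.1 := by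
  rw [lastOr0, dif_pos (Nat.succ_pos s)]
  exact n.2.2 _

lemma lastOr0_eq_last {s : ℕ} (n : StrictTup (s + 1)) :
    lastOr0 n.1 = n.1 (Fin.last s) := by
  rw [lastOr0, dif_pos (Nat.succ_pos s)]
  exact congrArg n.1 (Fin.ext (by simp [Fin.val_last]))

def tupEquiv (r : ℕ) :
    (Σ m : StrictTup r, {a : ℕ // lastOr0 m.1 < a}) ≃ StrictTup (r + 1) where
  toFun p := snocTup p.1 p.2
  invFun m :=
    ⟨⟨fun i => m.1 i.castSucc,
      ⟨fun i j hij => m.2.1 (by rwa [Fin.castSucc_lt_castSucc_iff]), fun i => m.2.2 _⟩⟩,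
     ⟨m.1 (Fin.last r), by
        rw [lastOr0]
        split_ifs with hr
        · exact m.2.1 (by rw [Fin.lt_def]; simp [Fin.val_last]; omega)
        · exact m.2.2 _⟩⟩
  left_inv p := by
    obtain ⟨m, a⟩ := p
    have hval : (fun i => (snocTup m a).1 i.castSucc) = m.1 :=
      funext fun i => snoc_castSucc m a i
    refine Sigma.ext (Subtype.ext hval) ?_
    rw [Subtype.heq_iff_coe_eq]
    · exact snoc_last m a
    · intro x
      show lastOr0 (fun i => (snocTup m a).1 i.castSucc) < x ↔ lastOr0 m.1 < x
      rw [hval]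
  right_inv m := by
    refine Subtype.ext (funext fun i => ?_)
    show (if h : (i : ℕ) < r then m.1 ((⟨(i : ℕ), h⟩ : Fin r).castSucc) else m.1 (Fin.last r))
        = m.1 i
    split_ifs with h
    · exact congrArg m.1 (Fin.ext (by simp))
    · have := i.isLt
      exact congrArg m.1 (Fin.ext (by simp [Fin.val_last]; omega))

lemma tupEquiv_apply {r : ℕ} (p : Σ m : StrictTup r, {a : ℕ // lastOr0 m.1 < a}) :
    tupEquiv r p = snocTup p.1 p.2 := rfl

/-- generalized connected sum with explicit exponent functions -/
def CS (r s : ℕ) (e : Fin r → ℕ) (f : Fin s → ℕ) : ℝ≥0∞ :=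
  ∑' p : StrictTup r × StrictTup s,
    (∏ i, 1 / (p.1.1 i : ℝ≥0∞) ^ e i) * (∏ j, 1 / (p.2.1 j : ℝ≥0∞) ^ f j) *
      ((Nat.factorial (lastOr0 p.1.1) : ℝ≥0∞) * (Nat.factorial (lastOr0 p.2.1)) /
        (Nat.factorial (lastOr0 p.1.1 + lastOr0 p.2.1)))

lemma connSumC_eq_CS (k l : List ℕ) : connSumC k l = CS k.length l.length k.get l.get := rfl

lemma CS_reindex {r r' s s' : ℕ} (h : r = r') (h2 : s = s') (e : Fin r → ℕ) (f : Fin s → ℕ) :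
    CS r s e f = CS r' s' (e ∘ Fin.cast h.symm) (f ∘ Fin.cast h2.symm) := by
  subst h; subst h2
  simp [Fin.cast_refl, Function.comp_id]

lemma one_div_pow_succ (x : ℕ) (t : ℕ) :
    (1 : ℝ≥0∞) / (x : ℝ≥0∞) ^ (t + 1) = (1 / (x : ℝ≥0∞) ^ t) * (1 / (x : ℝ≥0∞)) := by
  rw [pow_succ, one_div, one_div, one_div,
    ENNReal.mul_inv (Or.inr (ENNReal.natCast_ne_top x))
      (Or.inl (ENNReal.pow_ne_top (ENNReal.natCast_ne_top x)))]

set_option maxHeartbeats 2000000 in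
lemma CS_master (r s : ℕ) (e : Fin (r + 1) → ℕ) (f f' : Fin (s + 1) → ℕ)
    (he : e (Fin.last r) = 1)
    (hf : ∀ j : Fin s, f' j.castSucc = f j.castSucc)
    (hf' : f' (Fin.last s) = f (Fin.last s) + 1) :
    CS (r + 1) (s + 1) e f = CS r (s + 1) (e ∘ Fin.castSucc) f' := by
  calc CS (r + 1) (s + 1) e f
      = ∑' (m' : StrictTup (r + 1)) (n : StrictTup (s + 1)),
          (∏ i, 1 / (m'.1 i : ℝ≥0∞) ^ e i) * (∏ j, 1 / (n.1 j : ℝ≥0∞) ^ f j) *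
          ((Nat.factorial (lastOr0 m'.1) : ℝ≥0∞) * (Nat.factorial (lastOr0 n.1)) /
            (Nat.factorial (lastOr0 m'.1 + lastOr0 n.1))) := by unfold CS; exact ENNReal.tsum_prod (f := fun (m' : StrictTup (r+1)) (n : StrictTup (s+1)) =>
          (∏ i, 1 / (m'.1 i : ℝ≥0∞) ^ e i) * (∏ j, 1 / (n.1 j : ℝ≥0∞) ^ f j) *
          ((Nat.factorial (lastOr0 m'.1) : ℝ≥0∞) * (Nat.factorial (lastOr0 n.1)) /
            (Nat.factorial (lastOr0 m'.1 + lastOr0 n.1))))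
    _ = ∑' (p : Σ m : StrictTup r, {a : ℕ // lastOr0 m.1 < a}),
          ∑' (n : StrictTup (s + 1)),
          (∏ i, 1 / ((tupEquiv r p).1 i : ℝ≥0∞) ^ e i) * (∏ j, 1 / (n.1 j : ℝ≥0∞) ^ f j) *
          ((Nat.factorial (lastOr0 (tupEquiv r p).1) : ℝ≥0∞) * (Nat.factorial (lastOr0 n.1)) /
            (Nat.factorial (lastOr0 (tupEquiv r p).1 + lastOr0 n.1))) :=
        ((tupEquiv r).tsum_eq (fun (m' : StrictTup (r + 1)) =>
          ∑' (n : StrictTup (s + 1)),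
          (∏ i, 1 / (m'.1 i : ℝ≥0∞) ^ e i) * (∏ j, 1 / (n.1 j : ℝ≥0∞) ^ f j) *
          ((Nat.factorial (lastOr0 m'.1) : ℝ≥0∞) * (Nat.factorial (lastOr0 n.1)) /
            (Nat.factorial (lastOr0 m'.1 + lastOr0 n.1))))).symm
    _ = ∑' (m : StrictTup r) (a : {a : ℕ // lastOr0 m.1 < a}) (n : StrictTup (s + 1)),
          (∏ i, 1 / ((snocTup m a).1 i : ℝ≥0∞) ^ e i) * (∏ j, 1 / (n.1 j : ℝ≥0∞) ^ f j) *
          ((Nat.factorial (lastOr0 (snocTup m a).1) : ℝ≥0∞) * (Nat.factorial (lastOr0 n.1)) /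
            (Nat.factorial (lastOr0 (snocTup m a).1 + lastOr0 n.1))) := by
        rw [ENNReal.tsum_sigma' _]
        exact tsum_congr fun m => tsum_congr fun a => by rw [tupEquiv_apply]
    _ = ∑' (m : StrictTup r) (n : StrictTup (s + 1)) (a : {a : ℕ // lastOr0 m.1 < a}),
          (∏ i, 1 / ((snocTup m a).1 i : ℝ≥0∞) ^ e i) * (∏ j, 1 / (n.1 j : ℝ≥0∞) ^ f j) *
          ((Nat.factorial (lastOr0 (snocTup m a).1) : ℝ≥0∞) * (Nat.factorial (lastOr0 n.1)) /
            (Nat.factorial (lastOr0 (snocTup m a).1 + lastOr0 n.1))) :=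
        tsum_congr fun m => ENNReal.tsum_comm
    _ = ∑' (m : StrictTup r) (n : StrictTup (s + 1)),
          ((∏ i, 1 / (m.1 i : ℝ≥0∞) ^ e i.castSucc) * (∏ j, 1 / (n.1 j : ℝ≥0∞) ^ f j)) *
          ((1 / (lastOr0 n.1 : ℝ≥0∞)) *
            ((Nat.factorial (lastOr0 m.1) : ℝ≥0∞) * (Nat.factorial (lastOr0 n.1)) /
              (Nat.factorial (lastOr0 m.1 + lastOr0 n.1)))) := by
        refine tsum_congr fun m => tsum_congr fun n => ?_
        have hN := lastOr0_pos n
        calc (∑' (a : {a : ℕ // lastOr0 m.1 < a}),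
              (∏ i, 1 / ((snocTup m a).1 i : ℝ≥0∞) ^ e i) * (∏ j, 1 / (n.1 j : ℝ≥0∞) ^ f j) *
              ((Nat.factorial (lastOr0 (snocTup m a).1) : ℝ≥0∞) * (Nat.factorial (lastOr0 n.1)) /
                (Nat.factorial (lastOr0 (snocTup m a).1 + lastOr0 n.1))))
            = ∑' (a : {a : ℕ // lastOr0 m.1 < a}),
              ((∏ i, 1 / (m.1 i : ℝ≥0∞) ^ e i.castSucc) * (∏ j, 1 / (n.1 j : ℝ≥0∞) ^ f j)) *
              ((1 / (a.1 : ℝ≥0∞)) *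
                ((Nat.factorial a.1 : ℝ≥0∞) * (Nat.factorial (lastOr0 n.1)) /
                  (Nat.factorial (a.1 + lastOr0 n.1)))) := by
              refine tsum_congr fun a => ?_
              rw [lastOr0_snoc, Fin.prod_univ_castSucc,
                Finset.prod_congr rfl (fun i _ => by rw [snoc_castSucc m a i]),
                snoc_last, he, pow_one]
              ring
          _ = ((∏ i, 1 / (m.1 i : ℝ≥0∞) ^ e i.castSucc) * (∏ j, 1 / (n.1 j : ℝ≥0∞) ^ f j)) *
              ∑' (a : {a : ℕ // lastOr0 m.1 < a}),
                ((1 / (a.1 : ℝ≥0∞)) *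
                ((Nat.factorial a.1 : ℝ≥0∞) * (Nat.factorial (lastOr0 n.1)) /
                  (Nat.factorial (a.1 + lastOr0 n.1)))) := ENNReal.tsum_mul_left
          _ = ((∏ i, 1 / (m.1 i : ℝ≥0∞) ^ e i.castSucc) * (∏ j, 1 / (n.1 j : ℝ≥0∞) ^ f j)) *
              ((1 / (lastOr0 n.1 : ℝ≥0∞)) *
                ((Nat.factorial (lastOr0 m.1) : ℝ≥0∞) * (Nat.factorial (lastOr0 n.1)) /
                  (Nat.factorial (lastOr0 m.1 + lastOr0 n.1)))) := by
              rw [key_ennreal _ _ hN]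
    _ = ∑' (m : StrictTup r) (n : StrictTup (s + 1)),
          (∏ i, 1 / (m.1 i : ℝ≥0∞) ^ (e ∘ Fin.castSucc) i) * (∏ j, 1 / (n.1 j : ℝ≥0∞) ^ f' j) *
          ((Nat.factorial (lastOr0 m.1) : ℝ≥0∞) * (Nat.factorial (lastOr0 n.1)) /
            (Nat.factorial (lastOr0 m.1 + lastOr0 n.1))) := by
        refine tsum_congr fun m => tsum_congr fun n => ?_
        have hQ' : (∏ j, 1 / (n.1 j : ℝ≥0∞) ^ f' j)
            = (∏ j, 1 / (n.1 j : ℝ≥0∞) ^ f j) * (1 / (lastOr0 n.1 : ℝ≥0∞)) := by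
          rw [Fin.prod_univ_castSucc (f := fun j => 1 / (n.1 j : ℝ≥0∞) ^ f' j),
            Fin.prod_univ_castSucc (f := fun j => 1 / (n.1 j : ℝ≥0∞) ^ f j),
            Finset.prod_congr rfl (fun j _ => by rw [hf j]),
            hf', lastOr0_eq_last, one_div_pow_succ]
          ring
        rw [hQ']
        simp only [Function.comp]
        ring
    _ = CS r (s + 1) (e ∘ Fin.castSucc) f' := by unfold CS; exact (ENNReal.tsum_prod (f := fun (m : StrictTup r) (n : StrictTup (s+1)) =>
          (∏ i, 1 / (m.1 i : ℝ≥0∞) ^ (e ∘ Fin.castSucc) i) * (∏ j, 1 / (n.1 j : ℝ≥0∞) ^ f' j) *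
          ((Nat.factorial (lastOr0 m.1) : ℝ≥0∞) * (Nat.factorial (lastOr0 n.1)) /
            (Nat.factorial (lastOr0 m.1 + lastOr0 n.1))))).symm

end ConnAux

open ConnAux in
/-- **Classical transfer for connected sums.**
`Z(k₁,…,k_r,1; l₁,…,l_s) = Z(k₁,…,k_r; l₁,…,l_{s-1},l_s+1)` for `s > 0`. -/
theorem connSumC_transfer (k l : List ℕ) (ls : ℕ)
    (hk : ∀ a ∈ k, 0 < a) (hl : ∀ a ∈ l, 0 < a) (hls : 0 < ls) :
    connSumC (k ++ [1]) (l ++ [ls]) = connSumC k (l ++ [ls + 1]) := by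
  have hkl : (k ++ [1]).length = k.length + 1 := by simp
  have hll : (l ++ [ls]).length = l.length + 1 := by simp
  have hll' : (l ++ [ls + 1]).length = l.length + 1 := by simp
  have L : connSumC (k ++ [1]) (l ++ [ls])
      = CS (k.length + 1) (l.length + 1)
          ((k ++ [1]).get ∘ Fin.cast hkl.symm) ((l ++ [ls]).get ∘ Fin.cast hll.symm) := by
    rw [connSumC_eq_CS]
    exact CS_reindex hkl hll _ _
  have R : connSumC k (l ++ [ls + 1])
      = CS k.length (l.length + 1) k.get ((l ++ [ls + 1]).get ∘ Fin.cast hll'.symm) := by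
    rw [connSumC_eq_CS]
    have h := CS_reindex (rfl : k.length = k.length) hll' k.get ((l ++ [ls + 1]).get)
    rw [h]
    congr 1
  rw [L, R]
  have he : ((k ++ [1]).get ∘ Fin.cast hkl.symm) (Fin.last k.length) = 1 := by
    simp only [Function.comp, List.get_eq_getElem, Fin.coe_cast, Fin.val_last]
    exact List.getElem_concat_length rfl _
  have hf : ∀ j : Fin l.length,
      ((l ++ [ls + 1]).get ∘ Fin.cast hll'.symm) j.castSucc
        = ((l ++ [ls]).get ∘ Fin.cast hll.symm) j.castSucc := by
    intro j
    simp only [Function.comp, List.get_eq_getElem, Fin.coe_cast, Fin.coe_castSucc]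
    rw [List.getElem_append_left j.isLt, List.getElem_append_left j.isLt]
  have hf' : ((l ++ [ls + 1]).get ∘ Fin.cast hll'.symm) (Fin.last l.length)
      = ((l ++ [ls]).get ∘ Fin.cast hll.symm) (Fin.last l.length) + 1 := by
    simp only [Function.comp, List.get_eq_getElem, Fin.coe_cast, Fin.val_last]
    rw [List.getElem_concat_length rfl, List.getElem_concat_length rfl]
  rw [CS_master k.length l.length _ _ _ he hf hf']
  congr 1
  funext i
  show (k ++ [1]).get (Fin.cast hkl.symm i.castSucc) = k.get i
  simp only [List.get_eq_getElem, Fin.coe_cast, Fin.coe_castSucc]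
  exact List.getElem_append_left i.isLt

end
end

section
/- Power series expansion of the generating series: let 0 < q < 1, |x| < 1, and let k = (k_1, ..., k_r) be an admissible index. Then Z_q(k; x) = Σ_{c=0}^{∞} S_q(k; c) x^c, where Z_q(k; x) := Σ_{0 < m_1 < ... < m_r} Π_{i=1}^{r} q^{(k_i - 1)m_i} / (([m_i]_q - q^{m_i} x)[m_i]_q^{k_i - 1}). -/
open scoped ENNReal

noncomputable section

/-- The `q`-multiple zeta value `ζ_q(k)`, as a real number. -/
def qmzetaR (q : ℝ) (k : List ℕ) : ℝ :=
  ∑' m : StrictTup k.length, ∏ i, q ^ ((k.get i - 1) * m.1 i) / qint q (m.1 i) ^ k.get i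

/-- `S_q(k; c) = ∑_{c₁+⋯+c_r = c, cᵢ ≥ 0} ζ_q(k₁+c₁, …, k_r+c_r)`, as a real number. -/
def SqR (q : ℝ) (k : List ℕ) (c : ℕ) : ℝ :=
  ∑ e ∈ Finset.Nat.antidiagonalTuple k.length c,
    qmzetaR q (List.ofFn fun i => k.get i + e i)

/-- The generating series `Z_q(k; x)`, as a real number. -/
def Zq1R (q x : ℝ) (k : List ℕ) : ℝ :=
  ∑' m : StrictTup k.length, ZqTerm q x k m.1


namespace Zq1Aux

variable {q x : ℝ}

lemma one_le_qint (hq0 : 0 < q) (hq1 : q < 1) {m : ℕ} (hm : 1 ≤ m) : 1 ≤ qint q m := by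
  rw [qint, le_div_iff₀ (by linarith)]
  have h : q ^ m ≤ q ^ 1 := pow_le_pow_of_le_one hq0.le hq1.le hm
  simp at h; nlinarith

lemma qint_pos (hq0 : 0 < q) (hq1 : q < 1) {m : ℕ} (hm : 1 ≤ m) : 0 < qint q m :=
  lt_of_lt_of_le one_pos (one_le_qint hq0 hq1 hm)

lemma hasSum_pi_prod {β : Type*} : ∀ {n : ℕ} (t : Fin n → β → ℝ) (S : Fin n → ℝ),
    (∀ i, HasSum (t i) (S i)) →
    HasSum (fun e : Fin n → β => ∏ i, t i (e i)) (∏ i, S i)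
  | 0, t, S, _ => by
      simp only [Finset.univ_eq_empty, Finset.prod_empty]
      exact hasSum_single (f := fun _ : Fin 0 → β => (1:ℝ)) default
        (fun b hb => absurd (Subsingleton.elim b default) hb)
  | (n+1), t, S, h => by
      have IH := hasSum_pi_prod (fun i : Fin n => t i.succ) (fun i => S i.succ)
        (fun i => h i.succ)
      have h0 := h 0
      have hsum : Summable fun p : β × (Fin n → β) => t 0 p.1 * ∏ i, t i.succ (p.2 i) := by
        apply summable_mul_of_summable_norm (f := t 0)
          (g := fun e : Fin n → β => ∏ i, t i.succ (e i))
        · simp only [Real.norm_eq_abs]; exact summable_abs_iff.mpr h0.summable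
        · simp only [Real.norm_eq_abs]; exact summable_abs_iff.mpr IH.summable
      have key := h0.mul IH hsum
      refine (Fin.consEquiv (fun _ : Fin (n+1) => β)).hasSum_iff.mp ?_
      rw [Fin.prod_univ_succ]
      convert key using 1
      · rfl
      funext p
      simp [Fin.consEquiv, Fin.prod_univ_succ]

lemma factor_hasSum (hq0 : 0 < q) (hq1 : q < 1) (hx : |x| < 1) {K m : ℕ}
    (hK : 1 ≤ K) (hm : 1 ≤ m) :
    HasSum (fun c : ℕ => q ^ ((K + c - 1) * m) / qint q m ^ (K + c) * x ^ c)
      (q ^ ((K - 1) * m) / ((qint q m - q ^ m * x) * qint q m ^ (K - 1))) := by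
  have hQ1 : 1 ≤ qint q m := one_le_qint hq0 hq1 hm
  have hQ0 : (0:ℝ) < qint q m := by linarith
  have hqm1 : q ^ m ≤ 1 := pow_le_one₀ hq0.le hq1.le
  have hqmx : q ^ m * |x| < 1 := by
    calc q ^ m * |x| ≤ 1 * |x| := by gcongr
    _ < 1 := by simpa using hx
  have hρ : |q ^ m * x / qint q m| < 1 := by
    rw [abs_div, abs_of_pos hQ0, div_lt_one hQ0, abs_mul, abs_of_pos (pow_pos hq0 m)]
    exact lt_of_lt_of_le hqmx hQ1
  have hden : 0 < qint q m - q ^ m * x := by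
    have : q ^ m * x ≤ q ^ m * |x| := by
      have := le_abs_self x
      nlinarith [pow_pos hq0 m]
    nlinarith
  have hgeo := (hasSum_geometric_of_abs_lt_one hρ).mul_left
    (q ^ ((K - 1) * m) / qint q m ^ K)
  convert hgeo using 1
  · rfl
  · funext c
    have hexp : (K + c - 1) * m = (K - 1) * m + c * m := by
      have : K + c - 1 = (K - 1) + c := by omega
      rw [this, add_mul]
    rw [hexp]
    field_simp
    have hQc : qint q m ^ c * (qint q m)⁻¹ ^ c = 1 := by
      rw [← mul_pow, mul_inv_cancel₀ hQ0.ne', one_pow]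
    linear_combination (-(q ^ ((K - 1) * m) * q ^ (m * c) * x ^ c * qint q m ^ K)) * hQc
  · have hKK : qint q m ^ K = qint q m ^ (K - 1) * qint q m := by
      conv_lhs => rw [show K = (K - 1) + 1 by omega]
      rw [pow_succ]
    have h1 : (1 - q ^ m * x / qint q m) = (qint q m - q ^ m * x) / qint q m := by
      field_simp
    rw [hKK, h1, inv_div]
    field_simp

def stCast {a b : ℕ} (h : a = b) : StrictTup a ≃ StrictTup b where
  toFun m := ⟨fun i => m.1 (Fin.cast h.symm i),
    fun i j hij => m.2.1 (show (Fin.cast h.symm i) < (Fin.cast h.symm j) from hij),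
    fun i => m.2.2 _⟩
  invFun m := ⟨fun i => m.1 (Fin.cast h i),
    fun i j hij => m.2.1 (show (Fin.cast h i) < (Fin.cast h j) from hij),
    fun i => m.2.2 _⟩
  left_inv _ := rfl
  right_inv _ := rfl

lemma qmzetaR_ofFn {r : ℕ} (q : ℝ) (f : Fin r → ℕ) :
    qmzetaR q (List.ofFn f)
      = ∑' m : StrictTup r, ∏ i, q ^ ((f i - 1) * m.1 i) / qint q (m.1 i) ^ f i := by
  unfold qmzetaR
  have hl : (List.ofFn f).length = r := List.length_ofFn
  rw [← Equiv.tsum_eq (stCast hl.symm)]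
  congr 1; funext m
  refine Fintype.prod_equiv (finCongr hl) _ _ (fun i => ?_)
  have hg : (List.ofFn f).get i = f (Fin.cast hl i) := by
    rw [List.get_ofFn]
  rw [hg]; rfl

/-- `P(e; m) = ∏ᵢ q^((kᵢ+eᵢ-1)mᵢ)/[mᵢ]^(kᵢ+eᵢ)`. -/
def Pfun (q : ℝ) (k : List ℕ) (e : Fin k.length → ℕ) (m : StrictTup k.length) : ℝ :=
  ∏ i, q ^ ((k.get i + e i - 1) * m.1 i) / qint q (m.1 i) ^ (k.get i + e i)

/-- The doubly-indexed family. -/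
def Gfun (q x : ℝ) (k : List ℕ) (p : StrictTup k.length × (Fin k.length → ℕ)) : ℝ :=
  ∏ i, (q ^ ((k.get i + p.2 i - 1) * p.1.1 i) / qint q (p.1.1 i) ^ (k.get i + p.2 i)
    * x ^ p.2 i)

lemma Pfun_nonneg (hq0 : 0 < q) (hq1 : q < 1) {k : List ℕ}
    (e : Fin k.length → ℕ) (m : StrictTup k.length) : 0 ≤ Pfun q k e m :=
  Finset.prod_nonneg fun i _ => div_nonneg (pow_nonneg hq0.le _)
    (pow_nonneg (qint_pos hq0 hq1 (m.2.2 i)).le _)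

lemma prodq_le (hq0 : 0 < q) (hq1 : q < 1) {k : List ℕ} (hk : k ≠ [])
    (hadm : 2 ≤ k.getLast hk) (m : StrictTup k.length) :
    (∏ i, q ^ ((k.get i - 1) * m.1 i)) ≤ ∏ i, (q ^ ((k.length : ℝ)⁻¹)) ^ m.1 i := by
  have hr : 0 < k.length := List.length_pos_iff.mpr hk
  set s : ℝ := q ^ ((k.length : ℝ)⁻¹) with hsdef
  have hs0 : 0 < s := Real.rpow_pos_of_pos hq0 _
  have hs1 : s < 1 := Real.rpow_lt_one hq0.le hq1 (by positivity)
  have hsr : s ^ k.length = q := by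
    rw [hsdef, ← Real.rpow_natCast (q ^ ((k.length : ℝ)⁻¹)) k.length, ← Real.rpow_mul hq0.le,
      inv_mul_cancel₀ (Nat.cast_ne_zero.mpr hr.ne'), Real.rpow_one]
  set idx : Fin k.length := ⟨k.length - 1, by omega⟩ with hidx
  have hKlast : 2 ≤ k.get idx := by
    rw [List.getLast_eq_getElem] at hadm
    exact hadm
  have h1 : (∏ i, q ^ ((k.get i - 1) * m.1 i)) ≤ q ^ ((k.get idx - 1) * m.1 idx) := by
    rw [← Finset.mul_prod_erase _ _ (Finset.mem_univ idx)]
    have hle1 : (∏ i ∈ Finset.univ.erase idx, q ^ ((k.get i - 1) * m.1 i)) ≤ 1 :=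
      Finset.prod_le_one (fun i _ => by positivity)
        (fun i _ => pow_le_one₀ hq0.le hq1.le)
    have hnn : (0:ℝ) ≤ q ^ ((k.get idx - 1) * m.1 idx) := by positivity
    nlinarith [Finset.prod_nonneg
      (fun i (_ : i ∈ Finset.univ.erase idx) => pow_nonneg hq0.le ((k.get i - 1) * m.1 i))]
  have h2 : q ^ ((k.get idx - 1) * m.1 idx) ≤ q ^ (m.1 idx) :=
    pow_le_pow_of_le_one hq0.le hq1.le (Nat.le_mul_of_pos_left _ (by omega))
  have h3 : q ^ (m.1 idx) ≤ s ^ (∑ i, m.1 i) := by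
    rw [← hsr, ← pow_mul]
    apply pow_le_pow_of_le_one hs0.le hs1.le
    have : ∀ i : Fin k.length, i ∈ Finset.univ → m.1 i ≤ m.1 idx := fun i _ =>
      m.2.1.monotone (show i ≤ idx from by
        rw [Fin.le_def]; have := i.isLt; simp [hidx]; omega)
    calc ∑ i, m.1 i ≤ Finset.univ.card • m.1 idx := Finset.sum_le_card_nsmul _ _ _ this
      _ = k.length * m.1 idx := by simp [smul_eq_mul]
  calc (∏ i, q ^ ((k.get i - 1) * m.1 i)) ≤ q ^ (m.1 idx) := h1.trans h2
    _ ≤ s ^ (∑ i, m.1 i) := h3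
    _ = ∏ i, s ^ m.1 i := (Finset.prod_pow_eq_pow_sum _ _ _).symm

lemma Pfun_le (hq0 : 0 < q) (hq1 : q < 1) {k : List ℕ} (hk : k ≠ [])
    (hpos : ∀ a ∈ k, 0 < a) (hadm : 2 ≤ k.getLast hk)
    (e : Fin k.length → ℕ) (m : StrictTup k.length) :
    Pfun q k e m ≤ (∏ i, (q ^ ((k.length : ℝ)⁻¹)) ^ m.1 i) * ∏ i, q ^ e i := by
  have hK1 : ∀ i : Fin k.length, 1 ≤ k.get i := fun i => hpos _ (List.get_mem k i)
  have step1 : Pfun q k e m ≤ ∏ i, (q ^ ((k.get i - 1) * m.1 i) * q ^ e i) := by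
    refine Finset.prod_le_prod (fun i _ => div_nonneg (pow_nonneg hq0.le _)
      (pow_nonneg (qint_pos hq0 hq1 (m.2.2 i)).le _)) (fun i _ => ?_)
    have hd : q ^ ((k.get i + e i - 1) * m.1 i) / qint q (m.1 i) ^ (k.get i + e i)
        ≤ q ^ ((k.get i + e i - 1) * m.1 i) :=
      div_le_self (pow_nonneg hq0.le _) (one_le_pow₀ (one_le_qint hq0 hq1 (m.2.2 i)))
    refine hd.trans ?_
    rw [show k.get i + e i - 1 = (k.get i - 1) + e i from by have := hK1 i; omega,
      add_mul, pow_add]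
    exact mul_le_mul_of_nonneg_left
      (pow_le_pow_of_le_one hq0.le hq1.le (Nat.le_mul_of_pos_right _ (m.2.2 i)))
      (pow_nonneg hq0.le _)
  refine step1.trans ?_
  rw [Finset.prod_mul_distrib]
  exact mul_le_mul_of_nonneg_right (prodq_le hq0 hq1 hk hadm m)
    (Finset.prod_nonneg fun i _ => pow_nonneg hq0.le _)

end Zq1Aux

open Zq1Aux
set_option maxHeartbeats 2000000 in
/-- **Power series expansion of the generating series.**
`Z_q(k; x) = ∑_{c=0}^∞ S_q(k; c) x^c`. -/
theorem Zq1_power_series (q x : ℝ) (hq0 : 0 < q) (hq1 : q < 1) (hx : |x| < 1)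
    (k : List ℕ) (hk : k ≠ []) (hpos : ∀ a ∈ k, 0 < a) (hadm : 2 ≤ k.getLast hk) :
    HasSum (fun c : ℕ => SqR q k c * x ^ c) (Zq1R q x k) := by
  classical
  have hK1 : ∀ i : Fin k.length, 1 ≤ k.get i := fun i => hpos _ (List.get_mem k i)
  set s : ℝ := q ^ ((k.length : ℝ)⁻¹) with hsdef
  have hr : 0 < k.length := List.length_pos_iff.mpr hk
  have hs0 : 0 < s := Real.rpow_pos_of_pos hq0 _
  have hs1 : s < 1 := Real.rpow_lt_one hq0.le hq1 (by positivity)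
  -- summability of the majorants
  have hBsum : Summable (fun n : Fin k.length → ℕ => ∏ i, s ^ n i) :=
    (hasSum_pi_prod (fun _ c => s ^ c) (fun _ => (1 - s)⁻¹)
      (fun _ => hasSum_geometric_of_lt_one hs0.le hs1)).summable
  have hBst : Summable (fun m : StrictTup k.length => ∏ i, s ^ m.1 i) :=
    hBsum.comp_injective Subtype.coe_injective
  have hqx1 : q * |x| < 1 := by
    calc q * |x| ≤ 1 * |x| := by gcongr
    _ < 1 := by simpa using hx
  have hqx0 : 0 ≤ q * |x| := mul_nonneg hq0.le (abs_nonneg x)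
  have hxsum : Summable (fun e : Fin k.length → ℕ => ∏ i, (q * |x|) ^ e i) :=
    (hasSum_pi_prod (fun _ c => (q * |x|) ^ c) (fun _ => (1 - q * |x|)⁻¹)
      (fun _ => hasSum_geometric_of_lt_one hqx0 hqx1)).summable
  have hMaj : Summable (fun p : StrictTup k.length × (Fin k.length → ℕ) =>
      (∏ i, s ^ p.1.1 i) * ∏ i, (q * |x|) ^ p.2 i) := by
    apply summable_mul_of_summable_norm
      (f := fun m : StrictTup k.length => ∏ i, s ^ m.1 i)
      (g := fun e : Fin k.length → ℕ => ∏ i, (q * |x|) ^ e i)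
    · simp only [Real.norm_eq_abs]; exact summable_abs_iff.mpr hBst
    · simp only [Real.norm_eq_abs]; exact summable_abs_iff.mpr hxsum
  -- pointwise bound
  have hPle : ∀ (e : Fin k.length → ℕ) (m : StrictTup k.length),
      Pfun q k e m ≤ (∏ i, s ^ m.1 i) * ∏ i, q ^ e i :=
    fun e m => Pfun_le hq0 hq1 hk hpos hadm e m
  have hPsum : ∀ e, Summable (Pfun q k e) := fun e =>
    Summable.of_nonneg_of_le (fun m => Pfun_nonneg hq0 hq1 e m) (fun m => hPle e m)
      (hBst.mul_right _)
  have habs : ∀ p : StrictTup k.length × (Fin k.length → ℕ),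
      |Gfun q x k p| ≤ (∏ i, s ^ p.1.1 i) * ∏ i, (q * |x|) ^ p.2 i := by
    rintro ⟨m, e⟩
    have h1 : |Gfun q x k (m, e)| = Pfun q k e m * ∏ i, |x| ^ e i := by
      rw [Gfun, Pfun, ← Finset.prod_mul_distrib, Finset.abs_prod]
      exact Finset.prod_congr rfl fun i _ => by
        rw [abs_mul, abs_pow, abs_of_nonneg (div_nonneg (pow_nonneg hq0.le _)
          (pow_nonneg (qint_pos hq0 hq1 (m.2.2 i)).le _))]
    rw [h1]
    calc Pfun q k e m * ∏ i, |x| ^ e i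
        ≤ ((∏ i, s ^ m.1 i) * ∏ i, q ^ e i) * ∏ i, |x| ^ e i :=
          mul_le_mul_of_nonneg_right (hPle e m)
            (Finset.prod_nonneg fun i _ => pow_nonneg (abs_nonneg x) _)
      _ = (∏ i, s ^ m.1 i) * ∏ i, (q * |x|) ^ e i := by
          rw [mul_assoc, ← Finset.prod_mul_distrib]
          congr 1
          exact Finset.prod_congr rfl fun i _ => (mul_pow _ _ _).symm
  have hGsum : Summable (Gfun q x k) :=
    summable_abs_iff.mp
      (Summable.of_nonneg_of_le (fun p => abs_nonneg _) habs hMaj)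
  -- sum over e for fixed m : geometric series
  have h2 : ∀ m : StrictTup k.length,
      HasSum (fun e : Fin k.length → ℕ => Gfun q x k (m, e)) (ZqTerm q x k m.1) := by
    intro m
    have := hasSum_pi_prod
      (fun (i : Fin k.length) (c : ℕ) =>
        q ^ ((k.get i + c - 1) * m.1 i) / qint q (m.1 i) ^ (k.get i + c) * x ^ c)
      (fun i => q ^ ((k.get i - 1) * m.1 i) /
        ((qint q (m.1 i) - q ^ (m.1 i) * x) * qint q (m.1 i) ^ (k.get i - 1)))
      (fun i => factor_hasSum hq0 hq1 hx (hK1 i) (m.2.2 i))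
    exact this
  have hZ : HasSum (fun m : StrictTup k.length => ZqTerm q x k m.1)
      (∑' p, Gfun q x k p) := hGsum.hasSum.prod_fiberwise h2
  -- sum over m for fixed e : a q-MZV
  have h3 : ∀ e : Fin k.length → ℕ,
      HasSum (fun m : StrictTup k.length => Gfun q x k (m, e))
        (qmzetaR q (List.ofFn fun i => k.get i + e i) * x ^ (∑ i, e i)) := by
    intro e
    have hq := (hPsum e).hasSum
    have hmz : (∑' m, Pfun q k e m) = qmzetaR q (List.ofFn fun i => k.get i + e i) :=
      (qmzetaR_ofFn q (fun i => k.get i + e i)).symm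
    rw [hmz] at hq
    have hfe : (fun m : StrictTup k.length => Gfun q x k (m, e))
        = fun m => Pfun q k e m * x ^ (∑ i, e i) := by
      funext m
      rw [Gfun, Pfun, Finset.prod_mul_distrib, Finset.prod_pow_eq_pow_sum]
    rw [hfe]
    exact hq.mul_right _
  have hGswap : HasSum
      (Gfun q x k ∘ ⇑(Equiv.prodComm (Fin k.length → ℕ) (StrictTup k.length)))
      (∑' p, Gfun q x k p) :=
    ((Equiv.prodComm (Fin k.length → ℕ) (StrictTup k.length)).hasSum_iff
      (f := Gfun q x k)).mpr hGsum.hasSum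
  have hE : HasSum (fun e : Fin k.length → ℕ =>
      qmzetaR q (List.ofFn fun i => k.get i + e i) * x ^ (∑ i, e i))
      (∑' p, Gfun q x k p) := hGswap.prod_fiberwise h3
  -- group by total degree
  have hfib : ∀ c : ℕ, HasSum (fun a : Finset.Nat.antidiagonalTuple k.length c =>
      qmzetaR q (List.ofFn fun i => k.get i + (a : Fin k.length → ℕ) i)
        * x ^ (∑ i, (a : Fin k.length → ℕ) i)) (SqR q k c * x ^ c) := by
    intro c
    have hval : (∑ a : Finset.Nat.antidiagonalTuple k.length c,
        qmzetaR q (List.ofFn fun i => k.get i + (a : Fin k.length → ℕ) i)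
          * x ^ (∑ i, (a : Fin k.length → ℕ) i)) = SqR q k c * x ^ c := by
      rw [SqR, Finset.sum_mul,
        ← Finset.sum_coe_sort (Finset.Nat.antidiagonalTuple k.length c)
          (fun e => qmzetaR q (List.ofFn fun i => k.get i + e i) * x ^ c)]
      exact Finset.sum_congr rfl fun a _ => by
        rw [Finset.Nat.mem_antidiagonalTuple.mp a.2]
    exact hval ▸ hasSum_fintype _
  have hSig := ((Finset.Nat.sigmaAntidiagonalTupleEquivTuple k.length).hasSum_iff).mpr hE
  have final := hSig.sigma hfib
  have hZq : Zq1R q x k = ∑' p, Gfun q x k p := by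
    rw [Zq1R]; exact hZ.tsum_eq
  rw [hZq]
  exact final


end
end

section
/- Limit of q-multiple zeta values: for every admissible index k = (k_1, ..., k_r), the q-multiple zeta value ζ_q(k) tends to the multiple zeta value ζ(k) as q tends to 1 from below. -/
open scoped ENNReal

noncomputable section

section AuxQMZV

open Filter

/-- Key inequality: `q^t (1 + t(1-q)) ≤ 1` for `q ∈ [0,1]`. -/
private lemma pow_mul_one_add_le {q : ℝ} (hq0 : 0 ≤ q) (hq1 : q ≤ 1) (t : ℕ) :
    q ^ t * (1 + t * (1 - q)) ≤ 1 := by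
  induction t with
  | zero => simp
  | succ n ih =>
    have hqn : (0:ℝ) ≤ q ^ n := pow_nonneg hq0 n
    have key : q * (1 + ((n:ℝ) + 1) * (1 - q)) ≤ 1 + (n:ℝ) * (1 - q) := by
      nlinarith [sq_nonneg (1 - q)]
    have h1 : q ^ (n + 1) * (1 + (↑(n + 1) : ℝ) * (1 - q))
        ≤ q ^ n * (1 + (n : ℝ) * (1 - q)) := by
      push_cast
      rw [pow_succ, mul_assoc]
      exact mul_le_mul_of_nonneg_left key hqn
    exact h1.trans ih

private lemma one_add_mul_sub_nonneg {q : ℝ} (hq1 : q ≤ 1) (t : ℕ) :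
    (0:ℝ) < 1 + t * (1 - q) := by
  have : (0:ℝ) ≤ (t : ℝ) * (1 - q) := mul_nonneg (Nat.cast_nonneg t) (by linarith)
  linarith

/-- `[m]_q ≥ m / (1 + m(1-q))`. -/
private lemma qint_lower {q : ℝ} (hq0 : 0 < q) (hq1 : q < 1) (m : ℕ) :
    (m : ℝ) / (1 + m * (1 - q)) ≤ (1 - q ^ m) / (1 - q) := by
  have h1q : (0:ℝ) < 1 - q := by linarith
  have hd : (0:ℝ) < 1 + m * (1 - q) := one_add_mul_sub_nonneg hq1.le m
  rw [div_le_div_iff₀ hd h1q]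
  have := pow_mul_one_add_le hq0.le hq1.le m
  nlinarith [pow_nonneg hq0.le m]

/-- Boosted decay: `q^n (1+n(1-q))^N ≤ (N+1)^N`. -/
private lemma pow_mul_pow_le {q : ℝ} (hq0 : 0 ≤ q) (hq1 : q ≤ 1) (n N : ℕ) (hN : 1 ≤ N) :
    q ^ n * (1 + n * (1 - q)) ^ N ≤ ((N : ℝ) + 1) ^ N := by
  set a := n / N with ha
  have hb : (0:ℝ) < 1 + a * (1 - q) := one_add_mul_sub_nonneg hq1 a
  have hnn : (0:ℝ) < 1 + n * (1 - q) := one_add_mul_sub_nonneg hq1 n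
  have h1 : q ^ n ≤ (q ^ a) ^ N := by
    rw [← pow_mul]
    exact pow_le_pow_of_le_one hq0 hq1 (Nat.div_mul_le_self n N)
  have hnle : (n : ℝ) ≤ N * a + N := by
    have h := Nat.div_add_mod n N
    rw [← ha] at h
    have h2 : n % N < N := Nat.mod_lt n (by omega)
    have : n ≤ N * a + N := by omega
    exact_mod_cast this
  have h2 : 1 + (n:ℝ) * (1 - q) ≤ ((N:ℝ) + 1) * (1 + a * (1 - q)) := by
    have hx : (0:ℝ) ≤ (a:ℝ) * (1 - q) := mul_nonneg (Nat.cast_nonneg a) (by linarith)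
    have h1q : (0:ℝ) ≤ 1 - q := by linarith
    nlinarith [mul_le_mul_of_nonneg_right hnle h1q]
  calc q ^ n * (1 + n * (1 - q)) ^ N
      ≤ (q ^ a) ^ N * (((N:ℝ) + 1) * (1 + a * (1 - q))) ^ N := by
        exact mul_le_mul h1 (pow_le_pow_left₀ hnn.le h2 N) (pow_nonneg hnn.le N)
          (pow_nonneg (pow_nonneg hq0 a) N)
    _ = ((N:ℝ) + 1) ^ N * (q ^ a * (1 + a * (1 - q))) ^ N := by
        rw [mul_pow, mul_pow]; ring
    _ ≤ ((N:ℝ) + 1) ^ N * 1 := by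
        refine mul_le_mul_of_nonneg_left ?_ (by positivity)
        exact pow_le_one₀ (mul_nonneg (pow_nonneg hq0 a) hb.le)
          (pow_mul_one_add_le hq0 hq1 a)
    _ = _ := mul_one _

instance (r : ℕ) : Countable (StrictTup r) := by unfold StrictTup; infer_instance
instance (r : ℕ) : MeasurableSpace (StrictTup r) := ⊤
instance (r : ℕ) : MeasurableSingletonClass (StrictTup r) := ⟨fun _ => trivial⟩

private lemma tsum_pi_prod : ∀ (n : ℕ) (g : Fin n → ℕ → ℝ≥0∞),
    ∑' f : Fin n → ℕ, ∏ i, g i (f i) = ∏ i, ∑' m : ℕ, g i m := by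
  intro n
  induction n with
  | zero =>
    intro g
    simp [tsum_eq_single (default : Fin 0 → ℕ)
      (fun b hb => absurd (Subsingleton.elim b default) hb)]
  | succ n ih =>
    intro g
    rw [← (Fin.consEquiv (fun _ : Fin (n+1) => ℕ)).tsum_eq, Fin.prod_univ_succ]
    rw [ENNReal.tsum_prod']
    simp only [Fin.consEquiv_apply, Fin.prod_univ_succ, Fin.cons_zero, Fin.cons_succ]
    rw [← ih (fun i m => g i.succ m)]
    calc ∑' (a : ℕ) (b : Fin n → ℕ), g 0 a * ∏ i : Fin n, g i.succ (b i)
        = ∑' (a : ℕ), g 0 a * ∑' (b : Fin n → ℕ), ∏ i : Fin n, g i.succ (b i) := by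
          congr 1; ext a; rw [ENNReal.tsum_mul_left]
      _ = (∑' (a : ℕ), g 0 a) * ∑' (b : Fin n → ℕ), ∏ i : Fin n, g i.succ (b i) := by
          rw [ENNReal.tsum_mul_right]

/-- Sum of the entries of an index, as a sum over `Fin`. -/
def Ksum (k : List ℕ) : ℕ := ∑ i : Fin k.length, k.get i

/-- The exponent `1 + 1/(2r)` used for the dominating function. -/
noncomputable def expo (r : ℕ) : ℝ := 1 + 1 / (2 * r)

private lemma prod_term_le (k : List ℕ) (hk : k ≠ []) (hadm : 2 ≤ k.getLast hk)
    {q : ℝ} (hq0 : 0 < q) (hq1 : q < 1) (m : StrictTup k.length) :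
    ∏ i, q ^ ((k.get i - 1) * m.1 i) / qint q (m.1 i) ^ k.get i ≤
      ((Ksum k : ℝ) + 1) ^ Ksum k * ∏ i, 1 / (m.1 i : ℝ) ^ k.get i := by
  have hr : 0 < k.length := List.length_pos_iff.mpr hk
  set last : Fin k.length := ⟨k.length - 1, by omega⟩ with hlastdef
  have hklast : 2 ≤ k.get last := by
    rw [List.getLast_eq_getElem] at hadm
    exact hadm
  have hile : ∀ i : Fin k.length, m.1 i ≤ m.1 last := by
    intro i
    apply m.2.1.monotone
    rw [Fin.le_def, hlastdef]
    simp
    omega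
  set D : ℝ := 1 + (m.1 last : ℝ) * (1 - q) with hDdef
  have hD0 : 0 < D := one_add_mul_sub_nonneg hq1.le _
  have hqint_pos : ∀ i : Fin k.length, 0 < qint q (m.1 i) := by
    intro i
    have h1 : (0:ℝ) < (m.1 i : ℝ) / (1 + (m.1 i : ℝ) * (1 - q)) := by
      have := m.2.2 i
      have h2 := one_add_mul_sub_nonneg (q := q) hq1.le (m.1 i)
      apply div_pos (by exact_mod_cast Nat.cast_pos.mpr this) h2
    exact h1.trans_le (qint_lower hq0 hq1 (m.1 i))
  have hfac : ∀ i : Fin k.length,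
      q ^ ((k.get i - 1) * m.1 i) / qint q (m.1 i) ^ k.get i ≤
        D ^ k.get i / (m.1 i : ℝ) ^ k.get i *
          (if i = last then q ^ (m.1 last) else 1) := by
    intro i
    have hmi : 0 < m.1 i := m.2.2 i
    have hmiR : (0:ℝ) < (m.1 i : ℝ) := by exact_mod_cast hmi
    have hdi : (0:ℝ) < 1 + (m.1 i : ℝ) * (1 - q) := one_add_mul_sub_nonneg hq1.le _
    have hlb : (m.1 i : ℝ) / D ≤ qint q (m.1 i) := by
      refine le_trans ?_ (qint_lower hq0 hq1 (m.1 i))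
      apply div_le_div_of_nonneg_left hmiR.le hdi
      have : ((m.1 i : ℝ)) * (1 - q) ≤ (m.1 last : ℝ) * (1 - q) := by
        apply mul_le_mul_of_nonneg_right _ (by linarith)
        exact_mod_cast hile i
      linarith
    have hlb0 : (0:ℝ) < (m.1 i : ℝ) / D := div_pos hmiR hD0
    calc q ^ ((k.get i - 1) * m.1 i) / qint q (m.1 i) ^ k.get i
        ≤ q ^ ((k.get i - 1) * m.1 i) / ((m.1 i : ℝ) / D) ^ k.get i := by
          apply div_le_div_of_nonneg_left (by positivity) (pow_pos hlb0 _)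
          exact pow_le_pow_left₀ hlb0.le hlb _
      _ = D ^ k.get i / (m.1 i : ℝ) ^ k.get i * q ^ ((k.get i - 1) * m.1 i) := by
          rw [div_pow, div_div_eq_mul_div]
          ring
      _ ≤ D ^ k.get i / (m.1 i : ℝ) ^ k.get i *
            (if i = last then q ^ (m.1 last) else 1) := by
          apply mul_le_mul_of_nonneg_left _ (by positivity)
          by_cases h : i = last
          · rw [if_pos h, ← h]
            apply pow_le_pow_of_le_one hq0.le hq1.le
            have h2 : 2 ≤ k.get i := by rw [h]; exact hklast
            exact Nat.le_mul_of_pos_left _ (by omega)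
          · rw [if_neg h]
            exact pow_le_one₀ hq0.le hq1.le
  calc ∏ i, q ^ ((k.get i - 1) * m.1 i) / qint q (m.1 i) ^ k.get i
      ≤ ∏ i, (D ^ k.get i / (m.1 i : ℝ) ^ k.get i *
          (if i = last then q ^ (m.1 last) else 1)) := by
        apply Finset.prod_le_prod
        · intro i _
          exact div_nonneg (by positivity) (pow_nonneg (hqint_pos i).le _)
        · intro i _
          exact hfac i
    _ = (∏ i, D ^ k.get i / (m.1 i : ℝ) ^ k.get i) * q ^ (m.1 last) := by
        rw [Finset.prod_mul_distrib, Finset.prod_ite_eq' Finset.univ last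
          (fun _ => q ^ (m.1 last))]
        simp
    _ = (D ^ Ksum k * q ^ (m.1 last)) * ∏ i, 1 / (m.1 i : ℝ) ^ k.get i := by
        simp only [div_eq_mul_inv, one_mul, Finset.prod_mul_distrib,
          Finset.prod_pow_eq_pow_sum]
        rw [Ksum]
        ring
    _ ≤ ((Ksum k : ℝ) + 1) ^ Ksum k * ∏ i, 1 / (m.1 i : ℝ) ^ k.get i := by
        apply mul_le_mul_of_nonneg_right _ (by positivity)
        have hK : 1 ≤ Ksum k := by
          have h2 : k.get last ≤ ∑ i : Fin k.length, k.get i :=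
            Finset.single_le_sum (fun i _ => Nat.zero_le _) (Finset.mem_univ last)
          rw [Ksum]
          omega
        have := pow_mul_pow_le hq0.le hq1.le (m.1 last) (Ksum k) hK
        calc D ^ Ksum k * q ^ m.1 last = q ^ m.1 last * D ^ Ksum k := by ring
          _ ≤ _ := this

private lemma prod_pow_redistrib (k : List ℕ) (hk : k ≠ []) (hpos : ∀ a ∈ k, 0 < a)
    (hadm : 2 ≤ k.getLast hk) (m : StrictTup k.length) :
    ∏ i, 1 / (m.1 i : ℝ) ^ k.get i ≤ ∏ i, (m.1 i : ℝ) ^ (-(expo k.length)) := by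
  have hr : 0 < k.length := List.length_pos_iff.mpr hk
  set last : Fin k.length := ⟨k.length - 1, by omega⟩ with hlastdef
  have hklast : 2 ≤ k.get last := by
    rw [List.getLast_eq_getElem] at hadm; exact hadm
  have hile : ∀ i : Fin k.length, m.1 i ≤ m.1 last := by
    intro i
    apply m.2.1.monotone
    rw [Fin.le_def, hlastdef]; simp; omega
  have hm1 : ∀ i : Fin k.length, (1:ℝ) ≤ (m.1 i : ℝ) := by
    intro i; exact_mod_cast m.2.2 i
  have hkpos : ∀ i : Fin k.length, 0 < k.get i := by
    intro i
    apply hpos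
    rw [List.get_eq_getElem]
    exact List.getElem_mem i.2
  set c : ℝ := 1 / (2 * k.length) with hc
  have hc0 : 0 ≤ c := by positivity
  have key : ∏ i, (m.1 i : ℝ) ^ (expo k.length) ≤ ∏ i, (m.1 i : ℝ) ^ k.get i := by
    have step1 : ∀ i : Fin k.length,
        (m.1 i : ℝ) ^ (expo k.length) = (m.1 i : ℝ) * (m.1 i : ℝ) ^ c := by
      intro i
      have h0 : (0:ℝ) < (m.1 i : ℝ) := lt_of_lt_of_le one_pos (hm1 i)
      rw [expo, Real.rpow_add h0, Real.rpow_one]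
    have step2 : ∏ i, (m.1 i : ℝ) ^ c ≤ (m.1 last : ℝ) := by
      calc ∏ i, (m.1 i : ℝ) ^ c ≤ ∏ _i : Fin k.length, (m.1 last : ℝ) ^ c := by
            apply Finset.prod_le_prod (fun i _ => Real.rpow_nonneg (by positivity) c)
            intro i _
            apply Real.rpow_le_rpow (by positivity) _ hc0
            exact_mod_cast hile i
        _ = (m.1 last : ℝ) ^ (c * k.length) := by
            rw [Finset.prod_const, Finset.card_univ, Fintype.card_fin,
              ← Real.rpow_natCast ((m.1 last : ℝ) ^ c), ← Real.rpow_mul (by positivity)]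
        _ ≤ (m.1 last : ℝ) ^ (1:ℝ) := by
            apply Real.rpow_le_rpow_of_exponent_le (hm1 last)
            rw [hc]
            rw [div_mul_eq_mul_div, one_mul, div_le_one (by positivity)]
            have h1 : (1:ℝ) ≤ (k.length:ℝ) := by exact_mod_cast hr
            linarith
        _ = (m.1 last : ℝ) := Real.rpow_one _
    have step3 : (m.1 last : ℝ) ≤ ∏ i, (m.1 i : ℝ) ^ (k.get i - 1) := by
      calc (m.1 last : ℝ) = (m.1 last : ℝ) ^ 1 := (pow_one _).symm
        _ ≤ (m.1 last : ℝ) ^ (k.get last - 1) :=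
            pow_le_pow_right₀ (hm1 last) (by omega)
        _ ≤ ∏ i, (m.1 i : ℝ) ^ (k.get i - 1) := by
            rw [← Finset.mul_prod_erase Finset.univ
              (fun i => ((m.1 i : ℝ)) ^ (k.get i - 1)) (Finset.mem_univ last)]
            apply le_mul_of_one_le_right (by positivity)
            calc (1:ℝ) = ∏ _i ∈ Finset.univ.erase last, (1:ℝ) := by
                  rw [Finset.prod_const_one]
              _ ≤ _ := Finset.prod_le_prod (fun i _ => zero_le_one)
                  (fun i _ => one_le_pow₀ (hm1 i))
    calc ∏ i, (m.1 i : ℝ) ^ (expo k.length)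
        = (∏ i, (m.1 i : ℝ)) * ∏ i, (m.1 i : ℝ) ^ c := by
          rw [← Finset.prod_mul_distrib]
          exact Finset.prod_congr rfl fun i _ => step1 i
      _ ≤ (∏ i, (m.1 i : ℝ)) * ((m.1 last : ℝ)) := by
          apply mul_le_mul_of_nonneg_left step2
          exact Finset.prod_nonneg fun i _ => by positivity
      _ ≤ (∏ i, (m.1 i : ℝ)) * ∏ i, (m.1 i : ℝ) ^ (k.get i - 1) := by
          apply mul_le_mul_of_nonneg_left step3
          exact Finset.prod_nonneg fun i _ => by positivity
      _ = ∏ i, (m.1 i : ℝ) ^ k.get i := by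
          rw [← Finset.prod_mul_distrib]
          apply Finset.prod_congr rfl
          intro i _
          rw [← pow_succ']
          congr 1
          have := hkpos i
          omega
  have hP : (0:ℝ) < ∏ i, (m.1 i : ℝ) ^ (expo k.length) :=
    Finset.prod_pos fun i _ =>
      Real.rpow_pos_of_pos (lt_of_lt_of_le one_pos (hm1 i)) _
  calc ∏ i, 1 / (m.1 i : ℝ) ^ k.get i
      = (∏ i, (m.1 i : ℝ) ^ k.get i)⁻¹ := by
        rw [← Finset.prod_inv_distrib]
        exact Finset.prod_congr rfl fun i _ => one_div _
    _ ≤ (∏ i, (m.1 i : ℝ) ^ (expo k.length))⁻¹ := by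
        apply inv_anti₀ hP key
    _ = ∏ i, (m.1 i : ℝ) ^ (-(expo k.length)) := by
        rw [← Finset.prod_inv_distrib]
        apply Finset.prod_congr rfl
        intro i _
        rw [Real.rpow_neg (by positivity)]

private lemma qint_eq_geom {q : ℝ} (hq : q ≠ 1) (n : ℕ) :
    qint q n = ∑ j ∈ Finset.range n, q ^ j := by
  rw [qint, geom_sum_eq hq]
  rw [← neg_sub 1 (q ^ n), ← neg_sub 1 q, neg_div_neg_eq]

private lemma ofReal_prod_eq (k : List ℕ) (m : StrictTup k.length) :
    ENNReal.ofReal (∏ i, 1 / (m.1 i : ℝ) ^ k.get i) =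
      ∏ i, 1 / (m.1 i : ℝ≥0∞) ^ k.get i := by
  rw [ENNReal.ofReal_prod_of_nonneg (fun i _ => by positivity)]
  apply Finset.prod_congr rfl
  intro i _
  have hmi : (0:ℝ) < (m.1 i : ℝ) := by exact_mod_cast m.2.2 i
  rw [one_div, one_div, ENNReal.ofReal_inv_of_pos (by positivity),
    ENNReal.ofReal_pow (by positivity), ENNReal.ofReal_natCast]

private lemma term_tendsto (k : List ℕ) (m : StrictTup k.length) :
    Filter.Tendsto
      (fun q : ℝ => ENNReal.ofReal
        (∏ i, q ^ ((k.get i - 1) * m.1 i) / qint q (m.1 i) ^ k.get i))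
      (nhdsWithin 1 (Set.Ioo 0 1))
      (nhds (∏ i, 1 / (m.1 i : ℝ≥0∞) ^ k.get i)) := by
  have hreal : Tendsto
      (fun q : ℝ => ∏ i, q ^ ((k.get i - 1) * m.1 i) /
        (∑ j ∈ Finset.range (m.1 i), q ^ j) ^ k.get i)
      (nhds 1) (nhds (∏ i, 1 / (m.1 i : ℝ) ^ k.get i)) := by
    apply tendsto_finset_prod
    intro i _
    have hmi : (0:ℝ) < (m.1 i : ℝ) := by exact_mod_cast m.2.2 i
    have hden : Tendsto (fun q : ℝ => (∑ j ∈ Finset.range (m.1 i), q ^ j) ^ k.get i)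
        (nhds 1) (nhds ((m.1 i : ℝ) ^ k.get i)) := by
      have hc : Continuous fun q : ℝ =>
          (∑ j ∈ Finset.range (m.1 i), q ^ j) ^ k.get i := by fun_prop
      have h := hc.tendsto 1
      simpa using h
    have hnum : Tendsto (fun q : ℝ => q ^ ((k.get i - 1) * m.1 i))
        (nhds 1) (nhds 1) := by
      simpa using (continuous_pow ((k.get i - 1) * m.1 i)).tendsto (1:ℝ)
    have := hnum.div hden (by positivity)
    simpa [one_div, Pi.div_def] using this
  have hsub := hreal.mono_left (nhdsWithin_le_nhds (s := Set.Ioo (0:ℝ) 1))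
  have hcongr : (fun q : ℝ => ∏ i, q ^ ((k.get i - 1) * m.1 i) /
        (∑ j ∈ Finset.range (m.1 i), q ^ j) ^ k.get i) =ᶠ[nhdsWithin 1 (Set.Ioo 0 1)]
      (fun q : ℝ => ∏ i, q ^ ((k.get i - 1) * m.1 i) / qint q (m.1 i) ^ k.get i) := by
    filter_upwards [self_mem_nhdsWithin] with q hq
    apply Finset.prod_congr rfl
    intro i _
    rw [qint_eq_geom (ne_of_lt hq.2)]
  have h2 := hsub.congr' hcongr
  have h3 := (ENNReal.continuous_ofReal.tendsto _).comp h2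
  rw [ofReal_prod_eq k m] at h3
  exact h3

end AuxQMZV

/-- **Limit of q-multiple zeta values.**  For every admissible index `k`, the value
`ζ_q(k)` tends to `ζ(k)` as `q → 1⁻` (through `0 < q < 1`). -/
theorem qmzeta_tendsto_mzeta (k : List ℕ) (hk : k ≠ []) (hpos : ∀ a ∈ k, 0 < a)
    (hadm : 2 ≤ k.getLast hk) :
    Filter.Tendsto (fun q : ℝ => qmzeta q k)
      (nhdsWithin 1 (Set.Ioo 0 1)) (nhds (mzeta k)) := by
  classical
  have hr : 0 < k.length := List.length_pos_iff.mpr hk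
  set C : ℝ := ((Ksum k : ℝ) + 1) ^ Ksum k with hCdef
  have hC0 : 0 ≤ C := by positivity
  set e : ℝ := expo k.length with he
  set G : (Fin k.length → ℕ) → ℝ≥0∞ :=
    fun f => ENNReal.ofReal (C * ∏ i, (f i : ℝ) ^ (-e)) with hG
  have hq : (fun q : ℝ => qmzeta q k) = fun q : ℝ =>
      ∫⁻ m : StrictTup k.length, ENNReal.ofReal
        (∏ i, q ^ ((k.get i - 1) * m.1 i) / qint q (m.1 i) ^ k.get i)
        ∂MeasureTheory.Measure.count := by
    funext q
    rw [MeasureTheory.lintegral_count]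
    rfl
  have hmz : mzeta k = ∫⁻ m : StrictTup k.length,
      ∏ i, 1 / (m.1 i : ℝ≥0∞) ^ k.get i ∂MeasureTheory.Measure.count :=
    (MeasureTheory.lintegral_count _).symm
  rw [hq, hmz]
  apply MeasureTheory.tendsto_lintegral_filter_of_dominated_convergence
    (fun m : StrictTup k.length => G m.1)
  · exact Filter.Eventually.of_forall fun q => measurable_from_top
  · filter_upwards [self_mem_nhdsWithin] with q hqmem
    refine MeasureTheory.ae_of_all _ fun m => ?_
    apply ENNReal.ofReal_le_ofReal
    refine le_trans (prod_term_le k hk hadm hqmem.1 hqmem.2 m) ?_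
    exact mul_le_mul_of_nonneg_left (prod_pow_redistrib k hk hpos hadm m) hC0
  · rw [MeasureTheory.lintegral_count]
    have hle : ∑' m : StrictTup k.length, G m.1 ≤ ∑' f : Fin k.length → ℕ, G f :=
      ENNReal.tsum_comp_le_tsum_of_injective Subtype.val_injective G
    have hepos : (1:ℝ) < e := by
      rw [he, expo]
      have h1 : (0:ℝ) < (k.length:ℝ) := by exact_mod_cast hr
      have : (0:ℝ) < 1 / (2 * (k.length:ℝ)) := by positivity
      linarith
    have hsum : Summable (fun n : ℕ => (n:ℝ) ^ (-e)) := by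
      rw [Real.summable_nat_rpow]
      linarith
    have hZ : ∑' n : ℕ, ENNReal.ofReal ((n:ℝ) ^ (-e)) ≠ ⊤ := by
      rw [← ENNReal.ofReal_tsum_of_nonneg
        (fun n => Real.rpow_nonneg (Nat.cast_nonneg _) _) hsum]
      exact ENNReal.ofReal_ne_top
    have hGeq : ∀ f : Fin k.length → ℕ,
        G f = ENNReal.ofReal C * ∏ i, ENNReal.ofReal ((f i : ℝ) ^ (-e)) := by
      intro f
      show ENNReal.ofReal (C * ∏ i, (f i : ℝ) ^ (-e)) = _
      rw [ENNReal.ofReal_mul hC0,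
        ENNReal.ofReal_prod_of_nonneg
          (fun i _ => Real.rpow_nonneg (Nat.cast_nonneg _) _)]
    have htot : ∑' f : Fin k.length → ℕ, G f =
        ENNReal.ofReal C * ∏ _i : Fin k.length,
          ∑' n : ℕ, ENNReal.ofReal ((n:ℝ) ^ (-e)) := by
      calc ∑' f : Fin k.length → ℕ, G f
          = ∑' f : Fin k.length → ℕ,
              (ENNReal.ofReal C * ∏ i, ENNReal.ofReal ((f i : ℝ) ^ (-e))) :=
            tsum_congr hGeq
        _ = ENNReal.ofReal C *
              ∑' f : Fin k.length → ℕ, ∏ i, ENNReal.ofReal ((f i : ℝ) ^ (-e)) :=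
            ENNReal.tsum_mul_left
        _ = _ := by
            rw [tsum_pi_prod k.length
              (fun _ n => ENNReal.ofReal ((n:ℝ) ^ (-e)))]
    refine ne_top_of_le_ne_top ?_ hle
    rw [htot]
    exact ENNReal.mul_ne_top ENNReal.ofReal_ne_top
      (ENNReal.prod_ne_top fun i _ => hZ)
  · exact MeasureTheory.ae_of_all _ fun m => term_tendsto k m

end
end

section
/- Generating-series identity behind the sum formula (Remark): let r be a positive integer and x a real number with |x| < 1. Then Σ_{0 < m_1 < ... < m_r} 1/((m_1 − x)(m_2 − x) ··· (m_r − x) m_r) = Σ_{n=1}^{∞} 1/((n − x) n^r). -/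
open scoped ENNReal

noncomputable section

open Filter in
section
namespace SFGI

variable (x : ℝ)

noncomputable def F (m : ℕ) : ℝ := ∏ h ∈ Finset.Icc 1 m, ((h : ℝ) - x)

noncomputable def M (m n : ℕ) : ℝ := F x m * F x n / F x (m + n)

lemma F_zero : F x 0 = 1 := by simp [F]

lemma F_succ (m : ℕ) : F x (m + 1) = F x m * (((m : ℝ) + 1) - x) := by
  rw [F, Finset.prod_Icc_succ_top (by omega)]
  push_cast [F]; ring

lemma F_pos (hx : x < 1) (m : ℕ) : 0 < F x m := by
  apply Finset.prod_pos
  intro h hh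
  rw [Finset.mem_Icc] at hh
  have : (1 : ℝ) ≤ (h : ℝ) := by exact_mod_cast hh.1
  linarith

lemma M_nonneg (hx : x < 1) (m n : ℕ) : 0 ≤ M x m n :=
  div_nonneg (mul_nonneg (F_pos x hx m).le (F_pos x hx n).le) (F_pos x hx (m + n)).le

lemma M_zero_left (hx : x < 1) (n : ℕ) : M x 0 n = 1 := by
  have := F_pos x hx n
  simp [M, F_zero, div_self this.ne']

lemma M_comm (m n : ℕ) : M x m n = M x n m := by
  rw [M, M, Nat.add_comm, mul_comm]

lemma F_le (hx : x < 1) (m n : ℕ) (hn : 1 ≤ n) : F x (m + 1) ≤ F x (m + n) := by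
  induction n with
  | zero => omega
  | succ n ih =>
    rcases Nat.eq_or_lt_of_le hn with h | h
    · simp [← h]
    · have hn1 : 1 ≤ n := by omega
      have h2 : F x (m + n) ≤ F x (m + n + 1) := by
        rw [F_succ]
        have hp := F_pos x hx (m + n)
        have : (1 : ℝ) ≤ ((m + n : ℕ) : ℝ) + 1 - x := by
          have : (1 : ℝ) ≤ ((m + n : ℕ) : ℝ) := by
            have : 1 ≤ m + n := by omega
            exact_mod_cast this
          linarith
        nlinarith
      have : m + (n + 1) = m + n + 1 := by omega
      rw [this]
      exact (ih hn1).trans h2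

lemma M_le (hx : x < 1) (m n : ℕ) (hn : 1 ≤ n) :
    M x m n ≤ F x n / (((m : ℝ) + 1) - x) := by
  have hFm := F_pos x hx m
  have hFn := F_pos x hx n
  have hA : (0 : ℝ) < ((m : ℝ) + 1) - x := by
    have : (0 : ℝ) ≤ (m : ℝ) := Nat.cast_nonneg m
    linarith
  have h1 : F x m * (((m : ℝ) + 1) - x) ≤ F x (m + n) := by
    have := F_le x hx m n hn
    rwa [F_succ] at this
  have h2 : M x m n ≤ F x m * F x n / (F x m * (((m : ℝ) + 1) - x)) := by
    apply div_le_div_of_nonneg_left (by positivity) (by positivity) h1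
  calc M x m n ≤ F x m * F x n / (F x m * (((m : ℝ) + 1) - x)) := h2
    _ = F x n / (((m : ℝ) + 1) - x) := by
        field_simp

lemma M_tendsto (hx : x < 1) (l n : ℕ) (hn : 1 ≤ n) :
    Tendsto (fun K : ℕ => M x (l + K) n) atTop (nhds 0) := by
  apply squeeze_zero (fun K => M_nonneg x hx _ _)
    (fun K => M_le x hx (l + K) n hn)
  have h1 : Tendsto (fun K : ℕ => (((l + K : ℕ) : ℝ) + 1) - x) atTop atTop := by
    have : Tendsto (fun K : ℕ => (K : ℝ)) atTop atTop := tendsto_natCast_atTop_atTop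
    have h2 := tendsto_atTop_add_const_left atTop ((l : ℝ) + 1 - x) this
    apply h2.congr
    intro K; push_cast; ring
  simpa using (tendsto_const_nhds.div_atTop h1 : Tendsto (fun K : ℕ => F x n / (((l + K : ℕ) : ℝ) + 1 - x)) atTop (nhds 0))

lemma M_diff (hx : x < 1) (m n : ℕ) (hn : 1 ≤ n) :
    M x (m + 1) n / (((m : ℝ) + 1) - x) = (M x m n - M x (m + 1) n) / n := by
  have hFm := F_pos x hx m
  have hFn := F_pos x hx n
  have hFmn := F_pos x hx (m + n)
  have hA : (0 : ℝ) < ((m : ℝ) + 1) - x := by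
    have : (0 : ℝ) ≤ (m : ℝ) := Nat.cast_nonneg m
    linarith
  have hB : (0 : ℝ) < ((m : ℝ) + (n : ℝ) + 1) - x := by
    have : (0 : ℝ) ≤ (m : ℝ) + (n : ℝ) := by positivity
    linarith
  have hnR : (0 : ℝ) < (n : ℝ) := by exact_mod_cast hn
  have h1 : F x (m + 1) = F x m * (((m : ℝ) + 1) - x) := by
    rw [F_succ]
  have h2 : F x (m + 1 + n) = F x (m + n) * (((m : ℝ) + (n : ℝ) + 1) - x) := by
    have := F_succ x (m + n)
    rw [show m + 1 + n = m + n + 1 by omega, this]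
    push_cast; ring
  rw [M, M, h1, h2]
  field_simp
  ring

lemma partialSum (hx : x < 1) (l n : ℕ) (hn : 1 ≤ n) (K : ℕ) :
    ∑ d ∈ Finset.range K, M x (l + d + 1) n / (((l : ℝ) + (d : ℝ) + 1) - x)
      = (M x l n - M x (l + K) n) / n := by
  induction K with
  | zero => simp
  | succ K ih =>
    rw [Finset.sum_range_succ, ih]
    have := M_diff x hx (l + K) n hn
    rw [show ((((l + K : ℕ) : ℝ) + 1) - x) = (((l : ℝ) + (K : ℝ) + 1) - x) by push_cast; ring] at this
    rw [show l + (K + 1) = l + K + 1 by omega, this]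
    have hnR : (0 : ℝ) < (n : ℝ) := by exact_mod_cast hn
    field_simp
    ring

lemma key (hx : x < 1) (l n : ℕ) (hn : 1 ≤ n) :
    HasSum (fun d : ℕ => M x (l + d + 1) n / (((l : ℝ) + (d : ℝ) + 1) - x))
      (M x l n / n) := by
  have hnonneg : ∀ d : ℕ, 0 ≤ M x (l + d + 1) n / (((l : ℝ) + (d : ℝ) + 1) - x) := by
    intro d
    apply div_nonneg (M_nonneg x hx _ _)
    have : (0 : ℝ) ≤ (l : ℝ) + (d : ℝ) := by positivity
    linarith
  rw [hasSum_iff_tendsto_nat_of_nonneg hnonneg]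
  have heq : (fun K : ℕ => ∑ d ∈ Finset.range K,
      M x (l + d + 1) n / (((l : ℝ) + (d : ℝ) + 1) - x))
      = fun K => (M x l n - M x (l + K) n) / n :=
    funext (partialSum x hx l n hn)
  rw [heq]
  have h0 := M_tendsto x hx l n hn
  have h1 : Tendsto (fun K : ℕ => M x l n - M x (l + K) n) atTop (nhds (M x l n - 0)) :=
    Tendsto.sub tendsto_const_nhds h0
  have h2 := h1.div_const (n : ℝ)
  simpa using h2

/-- Reversed partial sums of gaps: `T g i = ∑_{k ≥ i} (g k + 1)`. -/
def T {r : ℕ} (g : Fin r → ℕ) (i : Fin r) : ℕ :=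
  ∑ k, if i ≤ k then g k + 1 else 0

def bigT {r : ℕ} (g : Fin r → ℕ) : ℕ := ∑ k, (g k + 1)

lemma T_zero {r : ℕ} (hr : 0 < r) (g : Fin r → ℕ) : T g ⟨0, hr⟩ = bigT g := by
  unfold T bigT
  apply Finset.sum_congr rfl
  intro k _
  rw [if_pos]
  exact Fin.mk_le_of_le_val (Nat.zero_le _)

lemma T_pos {r : ℕ} (g : Fin r → ℕ) (i : Fin r) : 0 < T g i := by
  unfold T
  have h1 : (if i ≤ i then g i + 1 else 0) ≤ T g i :=
    Finset.single_le_sum (f := fun k => if i ≤ k then g k + 1 else 0)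
      (fun k _ => Nat.zero_le _) (Finset.mem_univ i)
  rw [if_pos le_rfl] at h1
  unfold T at h1
  omega

lemma T_strictAnti {r : ℕ} (g : Fin r → ℕ) {a b : Fin r} (hab : a < b) :
    T g b < T g a := by
  unfold T
  apply Finset.sum_lt_sum
  · intro k _
    by_cases h : b ≤ k
    · rw [if_pos h, if_pos (le_of_lt (lt_of_lt_of_le hab h))]
    · rw [if_neg h]
      exact Nat.zero_le _
  · refine ⟨a, Finset.mem_univ a, ?_⟩
    rw [if_neg (not_le.mpr hab), if_pos le_rfl]
    omega

lemma T_top {r : ℕ} (g : Fin r → ℕ) (k : Fin r) (h : k.val + 1 = r) :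
    T g k = g k + 1 := by
  unfold T
  rw [Finset.sum_eq_single k]
  · rw [if_pos le_rfl]
  · intro b _ hb
    rw [if_neg]
    intro hle
    apply hb
    have : k.val ≤ b.val := hle
    have : b.val < r := b.isLt
    exact Fin.ext (by omega)
  · intro hk
    exact absurd (Finset.mem_univ k) hk

lemma T_step {r : ℕ} (g : Fin r → ℕ) (k : Fin r) (h : k.val + 1 < r) :
    T g k = g k + 1 + T g ⟨k.val + 1, h⟩ := by
  unfold T
  have hterm : ∀ j : Fin r, (if k ≤ j then g j + 1 else 0)
      = (if j = k then g j + 1 else 0) + (if (⟨k.val + 1, h⟩ : Fin r) ≤ j then g j + 1 else 0) := by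
    intro j
    have hc3 : ((⟨k.val + 1, h⟩ : Fin r) ≤ j) ↔ k.val + 1 ≤ j.val := by rw [Fin.le_def]
    have hc1 : (k ≤ j) ↔ k.val ≤ j.val := by rw [Fin.le_def]
    have hc2 : (j = k) ↔ j.val = k.val := Fin.ext_iff
    rcases lt_trichotomy j.val k.val with h1 | h1 | h1 <;>
      [rw [if_neg (by rw [hc1]; omega), if_neg (by rw [hc2]; omega), if_neg (by rw [hc3]; omega)];
       rw [if_pos (by rw [hc1]; omega), if_pos (by rw [hc2]; omega), if_neg (by rw [hc3]; omega)];
       rw [if_pos (by rw [hc1]; omega), if_neg (by rw [hc2]; omega), if_pos (by rw [hc3]; omega)]] <;>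
      simp
  rw [Finset.sum_congr rfl (fun j _ => hterm j), Finset.sum_add_distrib,
    Finset.sum_ite_eq' Finset.univ k (fun j => g j + 1)]
  simp

-- downward induction principle on Fin r
lemma down_ind {r : ℕ} (P : Fin r → Prop)
    (htop : ∀ k : Fin r, k.val + 1 = r → P k)
    (hstep : ∀ (k : Fin r) (h : k.val + 1 < r), P ⟨k.val + 1, h⟩ → P k) :
    ∀ k, P k := by
  have H : ∀ d : ℕ, ∀ k : Fin r, r - k.val = d → P k := by
    intro d
    induction d with
    | zero => intro k hk; have := k.isLt; omega
    | succ d ih =>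
      intro k hk
      rcases Nat.lt_or_ge (k.val + 1) r with h | h
      · exact hstep k h (ih ⟨k.val + 1, h⟩ (by simp; omega))
      · exact htop k (by have := k.isLt; omega)
  exact fun k => H (r - k.val) k rfl

lemma bigT_cons {j : ℕ} (d : ℕ) (g : Fin j → ℕ) :
    bigT (Fin.cons d g) = bigT g + (d + 1) := by
  unfold bigT
  rw [Fin.sum_univ_succ]
  simp [Fin.cons_zero, Fin.cons_succ]
  omega

lemma T_cons_succ {j : ℕ} (d : ℕ) (g : Fin j → ℕ) (i : Fin j) :
    T (Fin.cons d g) i.succ = T g i := by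
  unfold T
  rw [Fin.sum_univ_succ]
  have h0 : ¬ (i.succ ≤ (0 : Fin (j + 1))) := by
    rw [Fin.le_zero_iff]
    exact Fin.succ_ne_zero i
  rw [if_neg h0, zero_add]
  apply Finset.sum_congr rfl
  intro k _
  rw [Fin.cons_succ]
  congr 1
  rw [eq_iff_iff]
  exact Fin.succ_le_succ_iff

lemma T_cons_zero {j : ℕ} (d : ℕ) (g : Fin j → ℕ) :
    T (Fin.cons d g) 0 = bigT g + (d + 1) := by
  have h := T_zero (Nat.succ_pos j) (Fin.cons d g)
  have h0 : (⟨0, Nat.succ_pos j⟩ : Fin (j + 1)) = 0 := rfl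
  rw [h0] at h
  rw [h, bigT_cons]

def tup {r : ℕ} (g : Fin r → ℕ) : Fin r → ℕ := fun i => T g i.rev

lemma tup_strictMono {r : ℕ} (g : Fin r → ℕ) : StrictMono (tup g) := by
  intro a b hab
  exact T_strictAnti g (Fin.rev_lt_rev.mpr hab)

def eS (r : ℕ) (g : Fin r → ℕ) : StrictTup r :=
  ⟨tup g, tup_strictMono g, fun i => T_pos g i.rev⟩

lemma T_of_tup_eq {r : ℕ} {g1 g2 : Fin r → ℕ} (h : tup g1 = tup g2) :
    ∀ k, T g1 k = T g2 k := by
  intro k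
  have := congrFun h k.rev
  simpa [tup, Fin.rev_rev] using this

lemma eS_injective (r : ℕ) : Function.Injective (eS r) := by
  intro g1 g2 h
  have htup : tup g1 = tup g2 := congrArg Subtype.val h
  have hT := T_of_tup_eq htup
  funext k
  rcases Nat.lt_or_ge (k.val + 1) r with hk | hk
  · have h1 := T_step g1 k hk
    have h2 := T_step g2 k hk
    have h3 := hT k
    have h4 := hT ⟨k.val + 1, hk⟩
    omega
  · have hk' : k.val + 1 = r := by have := k.isLt; omega
    have h1 := T_top g1 k hk'
    have h2 := T_top g2 k hk'
    have h3 := hT k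
    omega

def ginv {r : ℕ} (m : Fin r → ℕ) (k : Fin r) : ℕ :=
  if h : k.val + 1 < r then m k.rev - m (⟨k.val + 1, h⟩ : Fin r).rev - 1
  else m k.rev - 1

lemma T_ginv {r : ℕ} (m : StrictTup r) : ∀ k, T (ginv m.1) k = m.1 k.rev := by
  have hmono := m.2.1
  have hpos := m.2.2
  apply down_ind
  · intro k hk
    rw [T_top _ k hk]
    unfold ginv
    rw [dif_neg (by omega)]
    have := hpos k.rev
    omega
  · intro k h ih
    rw [T_step _ k h, ih]
    unfold ginv
    rw [dif_pos h]
    have hlt : m.1 ((⟨k.val + 1, h⟩ : Fin r).rev) < m.1 k.rev := by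
      apply hmono
      apply Fin.rev_lt_rev.mpr
      rw [Fin.lt_def]
      simp
    omega

lemma eS_surjective (r : ℕ) : Function.Surjective (eS r) := by
  intro m
  refine ⟨ginv m.1, ?_⟩
  apply Subtype.ext
  funext i
  show T (ginv m.1) i.rev = m.1 i
  rw [T_ginv m i.rev, Fin.rev_rev]

lemma lastOr0_tup {r : ℕ} (hr : 0 < r) (g : Fin r → ℕ) :
    lastOr0 (tup g) = bigT g := by
  unfold lastOr0
  rw [dif_pos hr]
  show T g (⟨r - 1, by omega⟩ : Fin r).rev = bigT g
  have : ((⟨r - 1, by omega⟩ : Fin r).rev) = ⟨0, hr⟩ := by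
    apply Fin.ext
    rw [Fin.val_rev]
    show r - (r - 1 + 1) = 0
    omega
  rw [this, T_zero hr]

noncomputable def ZT (r j : ℕ) (g : Fin j → ℕ) (n : ℕ) : ℝ :=
  (∏ i, 1 / ((T g i : ℝ) - x)) * M x (bigT g) (n + 1) *
    (1 / (((n : ℝ) + 1 - x) * ((n : ℝ) + 1) ^ (r - j)))

noncomputable def Z (r j : ℕ) : ℝ≥0∞ :=
  ∑' (g : Fin j → ℕ) (n : ℕ), ENNReal.ofReal (ZT x r j g n)

lemma ZT_nonneg (hx : x < 1) (r j : ℕ) (g : Fin j → ℕ) (n : ℕ) :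
    0 ≤ ZT x r j g n := by
  unfold ZT
  have h1 : 0 ≤ ∏ i, 1 / ((T g i : ℝ) - x) := by
    apply Finset.prod_nonneg
    intro i _
    have := T_pos g i
    have : (1 : ℝ) ≤ (T g i : ℝ) := by exact_mod_cast this
    have : (0 : ℝ) < (T g i : ℝ) - x := by linarith
    positivity
  have h2 := M_nonneg x hx (bigT g) (n + 1)
  have h3 : (0 : ℝ) < ((n : ℝ) + 1 - x) := by
    have : (0 : ℝ) ≤ (n : ℝ) := Nat.cast_nonneg n
    linarith
  have h4 : (0 : ℝ) ≤ 1 / (((n : ℝ) + 1 - x) * ((n : ℝ) + 1) ^ (r - j)) := by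
    positivity
  positivity

lemma bigT_ge_one {r : ℕ} (hr : 0 < r) (g : Fin r → ℕ) : 1 ≤ bigT g := by
  have h : g ⟨0, hr⟩ + 1 ≤ ∑ k, (g k + 1) :=
    Finset.single_le_sum (f := fun k => g k + 1)
      (fun k _ => Nat.zero_le _) (Finset.mem_univ (⟨0, hr⟩ : Fin r))
  unfold bigT
  omega

lemma inner_step (hx : x < 1) (r j : ℕ) (hj : j < r) (g : Fin j → ℕ) (n : ℕ) :
    HasSum (fun d : ℕ => ZT x r (j + 1) (Fin.cons d g) n) (ZT x r j g n) := by
  have hk := key x hx (bigT g) (n + 1) (by omega)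
  set c := (∏ i : Fin j, 1 / ((T g i : ℝ) - x)) *
    (1 / (((n : ℝ) + 1 - x) * ((n : ℝ) + 1) ^ (r - j - 1))) with hc
  have h2 := hk.mul_left c
  have hfun : (fun d : ℕ => c * (M x (bigT g + d + 1) (n + 1)
      / (((bigT g : ℝ) + (d : ℝ) + 1) - x)))
      = fun d : ℕ => ZT x r (j + 1) (Fin.cons d g) n := by
    funext d
    unfold ZT
    rw [Fin.prod_univ_succ]
    have hprod : (∏ i : Fin j, (1 / ((T (Fin.cons d g) i.succ : ℝ) - x)))
        = ∏ i : Fin j, 1 / ((T g i : ℝ) - x) :=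
      Finset.prod_congr rfl (fun i _ => by rw [T_cons_succ])
    rw [hprod, T_cons_zero, bigT_cons]
    rw [show bigT g + (d + 1) = bigT g + d + 1 from rfl]
    rw [show r - (j + 1) = r - j - 1 by omega]
    push_cast
    ring
  rw [hfun] at h2
  have hval : c * (M x (bigT g) (n + 1) / ((n + 1 : ℕ) : ℝ)) = ZT x r j g n := by
    unfold ZT
    rw [show r - j = (r - j - 1) + 1 by omega, pow_succ]
    have hA : ((n : ℝ) + 1 - x) ≠ 0 := by
      have : (0 : ℝ) ≤ (n : ℝ) := Nat.cast_nonneg n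
      intro h; linarith [hx]
    have hB : ((n : ℝ) + 1) ≠ 0 := by positivity
    have hC : ((n : ℝ) + 1) ^ (r - j - 1) ≠ 0 := by positivity
    push_cast
    rw [hc]
    field_simp
  rwa [hval] at h2

lemma ofReal_tsum_inner (hx : x < 1) (r j : ℕ) (hj : j < r) (g : Fin j → ℕ) (n : ℕ) :
    ∑' d : ℕ, ENNReal.ofReal (ZT x r (j + 1) (Fin.cons d g) n)
      = ENNReal.ofReal (ZT x r j g n) := by
  have hs := inner_step x hx r j hj g n
  rw [← ENNReal.ofReal_tsum_of_nonneg (fun d => ZT_nonneg x hx r (j + 1) _ n) hs.summable,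
    hs.tsum_eq]

lemma Z_step (hx : x < 1) (r j : ℕ) (hj : j < r) : Z x r (j + 1) = Z x r j := by
  unfold Z
  rw [← Equiv.tsum_eq (Fin.consEquiv (fun _ : Fin (j + 1) => ℕ))
    (fun g' => ∑' n : ℕ, ENNReal.ofReal (ZT x r (j + 1) g' n))]
  have hrw : ∀ p : ℕ × (Fin j → ℕ),
      (∑' n : ℕ, ENNReal.ofReal (ZT x r (j + 1) ((Fin.consEquiv (fun _ : Fin (j + 1) => ℕ)) p) n))
      = ∑' n : ℕ, ENNReal.ofReal (ZT x r (j + 1) (Fin.cons p.1 p.2) n) := by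
    intro p
    congr 1
  rw [tsum_congr hrw, ENNReal.tsum_prod
    (f := fun d g => ∑' n : ℕ, ENNReal.ofReal (ZT x r (j + 1) (Fin.cons d g) n))]
  rw [ENNReal.tsum_comm]
  apply tsum_congr
  intro g
  rw [ENNReal.tsum_comm]
  apply tsum_congr
  intro n
  exact ofReal_tsum_inner x hx r j hj g n

lemma Z_zero (hx : x < 1) (r : ℕ) :
    Z x r 0 = ∑' n : ℕ, ENNReal.ofReal (1 / (((n : ℝ) + 1 - x) * ((n : ℝ) + 1) ^ r)) := by
  unfold Z
  rw [tsum_eq_single (fun i : Fin 0 => i.elim0)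
    (fun b hb => absurd (funext fun i => i.elim0) hb)]
  apply tsum_congr
  intro n
  congr 1
  unfold ZT
  rw [Fin.prod_univ_zero]
  have hbig : bigT (fun i : Fin 0 => i.elim0) = 0 := rfl
  rw [hbig, M_zero_left x hx, Nat.sub_zero]
  ring

lemma Z_top (hx : x < 1) (r : ℕ) (hr : 0 < r) :
    Z x r r = ∑' g : Fin r → ℕ,
      ENNReal.ofReal ((∏ i, 1 / ((T g i : ℝ) - x)) * (1 / (bigT g : ℝ))) := by
  unfold Z
  apply tsum_congr
  intro g
  have hL := bigT_ge_one hr g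
  have hk := key x hx 0 (bigT g) hL
  set c := ∏ i : Fin r, 1 / ((T g i : ℝ) - x) with hc
  have h2 := hk.mul_left c
  have hfun : (fun d : ℕ => c * (M x (0 + d + 1) (bigT g) / (((0 : ℕ) : ℝ) + (d : ℝ) + 1 - x)))
      = fun n : ℕ => ZT x r r g n := by
    funext n
    unfold ZT
    rw [show (0 : ℕ) + n + 1 = n + 1 by omega, M_comm x (n + 1) (bigT g)]
    rw [Nat.sub_self, pow_zero]
    push_cast
    ring
  rw [hfun] at h2
  have hval : c * (M x 0 (bigT g) / ((bigT g : ℕ) : ℝ)) = c * (1 / (bigT g : ℝ)) := by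
    rw [M_zero_left x hx]
  rw [hval] at h2
  rw [← ENNReal.ofReal_tsum_of_nonneg (fun n => ZT_nonneg x hx r r g n) h2.summable,
    h2.tsum_eq]

end SFGI
end

/-- **Generating-series identity behind the sum formula.**
`∑_{0<m₁<⋯<m_r} 1/((m₁-x)⋯(m_r-x) m_r) = ∑_{n=1}^∞ 1/((n-x) nʳ)`, in `[0,∞]`. -/
theorem sum_formula_generating_identity (r : ℕ) (hr : 0 < r) (x : ℝ) (hx : |x| < 1) :
    ∑' m : StrictTup r,
      ENNReal.ofReal ((∏ i, 1 / ((m.1 i : ℝ) - x)) * (1 / (lastOr0 m.1 : ℝ))) =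
    ∑' n : ℕ, ENNReal.ofReal (1 / (((n : ℝ) + 1 - x) * ((n : ℝ) + 1) ^ r)) := by
    have hx1 : x < 1 := lt_of_le_of_lt (le_abs_self x) hx
    have chain : ∀ j, j ≤ r → SFGI.Z x r j = SFGI.Z x r 0 := by
      intro j
      induction j with
      | zero => intro _; rfl
      | succ j ih =>
        intro hj
        rw [SFGI.Z_step x hx1 r j (by omega), ih (by omega)]
    have h1 : ∑' m : StrictTup r,
        ENNReal.ofReal ((∏ i, 1 / ((m.1 i : ℝ) - x)) * (1 / (lastOr0 m.1 : ℝ)))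
        = ∑' g : Fin r → ℕ,
          ENNReal.ofReal ((∏ i, 1 / ((SFGI.T g i : ℝ) - x)) * (1 / (SFGI.bigT g : ℝ))) := by
      rw [← Equiv.tsum_eq
        (Equiv.ofBijective (SFGI.eS r) ⟨SFGI.eS_injective r, SFGI.eS_surjective r⟩)
        (fun m : StrictTup r =>
          ENNReal.ofReal ((∏ i, 1 / ((m.1 i : ℝ) - x)) * (1 / (lastOr0 m.1 : ℝ))))]
      apply tsum_congr
      intro g
      have hval : (Equiv.ofBijective (SFGI.eS r)
          ⟨SFGI.eS_injective r, SFGI.eS_surjective r⟩ g).1 = SFGI.tup g := rfl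
      have hp : (∏ i, 1 / ((SFGI.tup g i : ℝ) - x)) = ∏ i, 1 / ((SFGI.T g i : ℝ) - x) := by
        have h := Equiv.prod_comp (Fin.revPerm (n := r))
          (fun i => 1 / ((SFGI.T g i : ℝ) - x))
        simpa [SFGI.tup, Fin.revPerm_apply] using h
      rw [hval, SFGI.lastOr0_tup hr, hp]
    rw [h1, ← SFGI.Z_top x hx1 r hr, chain r le_rfl, SFGI.Z_zero x hx1 r]

end
end

section
/- Sum formula for multiple zeta values: for integers n and r with n > r ≥ 1, the sum of ζ(k_1, ..., k_r) over all admissible indices (k_1, ..., k_r) of depth r and weight k_1 + ... + k_r = n equals ζ(n). -/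
open scoped ENNReal

noncomputable section

open Filter in
section
namespace SumFormulaAux

/-- `F x m = ∏_{h=1}^m (h - x)`. -/
def F (x : ℝ) (m : ℕ) : ℝ := ∏ h ∈ Finset.Icc 1 m, ((h : ℝ) - x)

lemma F_zero (x : ℝ) : F x 0 = 1 := by simp [F]

lemma F_succ (x : ℝ) (m : ℕ) : F x (m + 1) = F x m * ((m + 1 : ℝ) - x) := by
  rw [F, F, Finset.prod_Icc_succ_top (by omega)]
  push_cast; ring

lemma F_pos {x : ℝ} (hx : x < 1) (m : ℕ) : 0 < F x m := by
  induction m with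
  | zero => simp [F_zero]
  | succ m ih =>
      rw [F_succ]
      have h0 : (0:ℝ) ≤ (m:ℝ) := Nat.cast_nonneg m
      have : (0:ℝ) < (m + 1 : ℝ) - x := by linarith
      positivity

lemma F_le_F {x : ℝ} (hx : x ≤ 1) (hx1 : x < 1) {m : ℕ} (hm : 1 ≤ m) (k : ℕ) :
    F x m ≤ F x (m + k) := by
  induction k with
  | zero => exact le_of_eq rfl
  | succ k ih =>
      rw [show m + (k+1) = (m + k) + 1 by omega, F_succ]
      have h0 : (0:ℝ) ≤ (m:ℝ) + k := by positivity
      have hm1 : (1:ℝ) ≤ (m:ℝ) := by exact_mod_cast hm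
      have h1 : (1:ℝ) ≤ ((m + k : ℕ):ℝ) + 1 - x := by push_cast; linarith
      nlinarith [F_pos hx1 (m + k)]

/-- connector -/
def G (x : ℝ) (m p : ℕ) : ℝ := F x m * F x p / F x (m + p)

lemma G_comm (x : ℝ) (m p : ℕ) : G x m p = G x p m := by
  rw [G, G, mul_comm, Nat.add_comm]

lemma G_zero {x : ℝ} (hx1 : x < 1) (p : ℕ) : G x 0 p = 1 := by
  rw [G, F_zero, one_mul, Nat.zero_add, div_self (F_pos hx1 p).ne']

lemma G_pos {x : ℝ} (hx : x < 1) (m p : ℕ) : 0 < G x m p := by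
  have h1 := F_pos hx m; have h2 := F_pos hx p; have h3 := F_pos hx (m+p)
  rw [G]; positivity

/-- Key telescoping identity (real form). -/
lemma key_hasSum {x : ℝ} (hx1 : x < 1) (a p : ℕ) (hp : 0 < p) :
    HasSum (fun j : ℕ => 1 / ((a + 1 + j : ℝ) - x) * G x (a + 1 + j) p)
      (G x a p / p) := by
  set A : ℕ → ℝ := fun j => F x (a + j) * F x p / (p * F x (a + j + p)) with hA
  have hcast : ∀ j : ℕ, ((a + 1 + j : ℕ) : ℝ) = (a:ℝ) + 1 + j := by intro j; push_cast; ring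
  have hterm : ∀ j : ℕ, 1 / ((a + 1 + j : ℝ) - x) * G x (a + 1 + j) p = A j - A (j + 1) := by
    intro j
    have h1 : F x (a + 1 + j) = F x (a + j) * (((a:ℝ) + 1 + j) - x) := by
      rw [show a + 1 + j = (a + j) + 1 by omega, F_succ]; push_cast; ring_nf
    have h2 : F x (a + 1 + j + p) = F x (a + j + p) * (((a:ℝ) + 1 + j + p) - x) := by
      rw [show a + 1 + j + p = (a + j + p) + 1 by omega, F_succ]; push_cast; ring_nf
    have e2 : A (j+1) = F x (a+j) * (((a:ℝ) + 1 + j) - x) * F x p /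
        (p * (F x (a + j + p) * (((a:ℝ) + 1 + j + p) - x))) := by
      rw [hA]; simp only
      rw [show a + (j+1) = (a + j) + 1 by omega, F_succ,
        show a + j + 1 + p = (a + j + p) + 1 by omega, F_succ]
      push_cast; ring_nf
    have hja : (0:ℝ) ≤ (a:ℝ) + 1 + j - x - (1 - x) := by
      have := Nat.cast_nonneg (α := ℝ) a; have := Nat.cast_nonneg (α := ℝ) j; linarith
    have hne1 : (0:ℝ) < ((a:ℝ) + 1 + j) - x := by linarith
    have hne2 : (0:ℝ) < F x (a + j + p) := F_pos hx1 _
    have hpne : (0:ℝ) < (p : ℝ) := by exact_mod_cast hp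
    have hne3 : (0:ℝ) < ((a:ℝ) + 1 + j + p) - x := by linarith
    have e1 : A j = F x (a+j) * F x p / (p * F x (a + j + p)) := by rw [hA]
    rw [G, h1, h2, e2, e1]
    have hc2 : ((a:ℝ) + 1 + j + p) - x - (((a:ℝ) + 1 + j) - x) = p := by ring
    field_simp
    ring
  have hnonneg : ∀ j : ℕ, 0 ≤ 1 / ((a + 1 + j : ℝ) - x) * G x (a + 1 + j) p := by
    intro j
    have h1 : (0:ℝ) < (a + 1 + j : ℝ) - x := by
      have := Nat.cast_nonneg (α := ℝ) a; have := Nat.cast_nonneg (α := ℝ) j; linarith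
    have := G_pos hx1 (a + 1 + j) p
    positivity
  rw [hasSum_iff_tendsto_nat_of_nonneg hnonneg]
  have hsum : ∀ n : ℕ,
      ∑ j ∈ Finset.range n, (1 / ((a + 1 + j : ℝ) - x) * G x (a + 1 + j) p) = A 0 - A n := by
    intro n
    rw [← Finset.sum_range_sub' A n]
    exact Finset.sum_congr rfl fun j _ => hterm j
  simp only [hsum]
  have hA0 : A 0 = G x a p / p := by
    rw [hA]; simp only [Nat.add_zero]; rw [G]; ring
  have htend : Tendsto A atTop (nhds 0) := by
    have hb : ∀ j : ℕ, A j ≤ (F x p / p) * (1 / ((j:ℝ) + 1 - x)) := by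
      intro j
      have hjx : (0:ℝ) < (j:ℝ) + 1 - x := by
        have := Nat.cast_nonneg (α := ℝ) j; linarith
      have hpne : (0:ℝ) < (p : ℝ) := by exact_mod_cast hp
      have hkey : F x (a + j) * ((j:ℝ) + 1 - x) ≤ F x (a + j + p) := by
        have h1 : F x (a + j + 1) = F x (a + j) * (((a+j : ℕ):ℝ) + 1 - x) := F_succ x (a+j)
        have h2 : F x (a + j + 1) ≤ F x (a + j + p) := by
          have := F_le_F hx1.le hx1 (m := a + j + 1) (by omega) (p - 1)
          rwa [show a + j + 1 + (p - 1) = a + j + p by omega] at this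
        have h3 : F x (a + j) * ((j:ℝ) + 1 - x) ≤ F x (a + j + 1) := by
          rw [h1]
          have : ((j:ℝ) + 1 - x) ≤ ((a+j:ℕ):ℝ) + 1 - x := by
            push_cast
            have := Nat.cast_nonneg (α := ℝ) a; linarith
          nlinarith [F_pos hx1 (a + j)]
        linarith
      have hFp : 0 < F x (a + j + p) := F_pos hx1 _
      have hFP2 : 0 < F x p := F_pos hx1 p
      rw [hA]; simp only
      rw [div_le_iff₀ (by positivity)]
      have : F x p / ↑p * (1 / (↑j + 1 - x)) * (↑p * F x (a + j + p))
          = F x p * F x (a+j+p) / ((j:ℝ)+1-x) := by field_simp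
      rw [this, le_div_iff₀ hjx]
      nlinarith
    have hb0 : ∀ j : ℕ, 0 ≤ A j := by
      intro j; rw [hA]; simp only
      have := F_pos hx1 (a+j); have := F_pos hx1 p; have := F_pos hx1 (a+j+p)
      have hpne : (0:ℝ) < (p : ℝ) := by exact_mod_cast hp
      positivity
    have hlim : Tendsto (fun j : ℕ => (F x p / p) * (1 / ((j:ℝ) + 1 - x))) atTop (nhds 0) := by
      rw [show (0:ℝ) = (F x p / p) * 0 by ring]
      apply Tendsto.const_mul
      have h1 : Tendsto (fun j : ℕ => ((j:ℝ) + 1 - x)) atTop atTop := by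
        have := tendsto_atTop_add_const_right atTop (1 - x)
          (tendsto_natCast_atTop_atTop (R := ℝ))
        exact this.congr (fun j => by ring)
      exact h1.inv_tendsto_atTop.congr (fun j => by simp [one_div, Pi.inv_apply])
    exact squeeze_zero hb0 hb hlim
  have h := ((tendsto_const_nhds : Tendsto (fun _ : ℕ => A 0) atTop (nhds (A 0))).sub htend)
  rw [sub_zero] at h
  rw [← hA0]
  exact h

/-- Key telescoping identity, `ℝ≥0∞` form, general index set via injection j ↦ a+1+j. -/
lemma key_tsum {x : ℝ} (hx1 : x < 1) (a p : ℕ) (hp : 0 < p) :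
    ∑' j : ℕ, ENNReal.ofReal (1 / ((a + 1 + j : ℝ) - x) * G x (a + 1 + j) p)
      = ENNReal.ofReal (G x a p / p) := by
  rw [← ENNReal.ofReal_tsum_of_nonneg]
  · rw [(key_hasSum hx1 a p hp).tsum_eq]
  · intro j
    have h1 : (0:ℝ) < (a + 1 + j : ℝ) - x := by
      have := Nat.cast_nonneg (α := ℝ) a; have := Nat.cast_nonneg (α := ℝ) j; linarith
    have := G_pos hx1 (a + 1 + j) p
    positivity
  · exact (key_hasSum hx1 a p hp).summable


instance : Unique (StrictTup 0) where
  default := ⟨fun i => i.elim0, fun i => i.elim0, fun i => i.elim0⟩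
  uniq := fun t => Subtype.ext (funext fun i => i.elim0)

lemma le_lastOr0 {j : ℕ} (m : StrictTup j) (i : Fin j) : m.1 i ≤ lastOr0 m.1 := by
  have hj : 0 < j := i.pos
  rw [lastOr0, dif_pos hj]
  exact m.2.1.monotone (by rw [Fin.le_def]; simp; omega)

lemma lastOr0_pos {j : ℕ} (hj : 0 < j) (m : StrictTup j) : 0 < lastOr0 m.1 := by
  rw [lastOr0, dif_pos hj]; exact m.2.2 _

/-- snoc map on strict tuples -/
def stSnocFun (j : ℕ) (p : Σ m : StrictTup j, {q : ℕ // lastOr0 m.1 < q}) : StrictTup (j+1) :=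
  ⟨Fin.snoc p.1.1 p.2.1, by
      intro u v huv
      rcases Fin.eq_castSucc_or_eq_last v with ⟨v', rfl⟩ | rfl
      · obtain ⟨u', rfl⟩ : ∃ u', u = Fin.castSucc u' := by
          refine Fin.eq_castSucc_or_eq_last u |>.resolve_right ?_
          rintro rfl
          exact absurd (huv.trans_le (Fin.le_last _)) (lt_irrefl _)
        rw [Fin.snoc_castSucc, Fin.snoc_castSucc]
        exact p.1.2.1 (by rwa [Fin.castSucc_lt_castSucc_iff] at huv)
      · obtain ⟨u', rfl⟩ : ∃ u', u = Fin.castSucc u' := by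
          refine Fin.eq_castSucc_or_eq_last u |>.resolve_right ?_
          rintro rfl; exact absurd huv (lt_irrefl _)
        rw [Fin.snoc_castSucc, Fin.snoc_last]
        exact lt_of_le_of_lt (le_lastOr0 p.1 u') p.2.2, by
      intro i
      rcases Fin.eq_castSucc_or_eq_last i with ⟨i', rfl⟩ | rfl
      · rw [Fin.snoc_castSucc]; exact p.1.2.2 i'
      · rw [Fin.snoc_last]; exact Nat.lt_of_le_of_lt (Nat.zero_le _) p.2.2⟩

/-- snoc decomposition of strict tuples -/
def stSnoc (j : ℕ) : (Σ m : StrictTup j, {q : ℕ // lastOr0 m.1 < q}) ≃ StrictTup (j+1) :=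
  Equiv.ofBijective (stSnocFun j) (by
    constructor
    · rintro ⟨m, q⟩ ⟨m', q'⟩ h
      have h0 : (Fin.snoc m.1 q.1 : Fin (j+1) → ℕ) = Fin.snoc m'.1 q'.1 := congrArg Subtype.val h
      have hm : m = m' := by
        apply Subtype.ext
        have := congrArg Fin.init h0
        rwa [Fin.init_snoc, Fin.init_snoc] at this
      subst hm
      have hq : q = q' := by
        apply Subtype.ext
        have := congrFun h0 (Fin.last j)
        rwa [Fin.snoc_last, Fin.snoc_last] at this
      rw [hq]
    · intro t
      refine ⟨⟨⟨Fin.init t.1,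
        fun u v huv => t.2.1 (by rwa [Fin.castSucc_lt_castSucc_iff]),
        fun i => t.2.2 _⟩,
        ⟨t.1 (Fin.last j), ?_⟩⟩, Subtype.ext (Fin.snoc_init_self t.1)⟩
      rcases Nat.eq_zero_or_pos j with hj | hj
      · subst hj
        rw [lastOr0, dif_neg (lt_irrefl 0)]
        exact t.2.2 _
      · rw [lastOr0, dif_pos hj]
        exact t.2.1 (by rw [Fin.lt_def]; simp [Fin.last]; omega))

lemma stSnoc_apply {j : ℕ} (m : StrictTup j) (q : {q : ℕ // lastOr0 m.1 < q}) :
    (stSnoc j ⟨m, q⟩).1 = Fin.snoc m.1 q.1 := rfl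

lemma lastOr0_stSnoc {j : ℕ} (m : StrictTup j) (q : {q : ℕ // lastOr0 m.1 < q}) :
    lastOr0 ((stSnoc j ⟨m, q⟩).1) = q.1 := by
  rw [stSnoc_apply, lastOr0, dif_pos (Nat.zero_lt_succ j)]
  have h : (⟨j + 1 - 1, by omega⟩ : Fin (j+1)) = Fin.last j := rfl
  rw [h]
  exact Fin.snoc_last _ _

/-- shift equivalence for the inner variable -/
def shiftEquiv (a : ℕ) : ℕ ≃ {q : ℕ // a < q} where
  toFun j := ⟨a + 1 + j, by omega⟩
  invFun q := q.1 - a - 1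
  left_inv := fun j => by show a + 1 + j - a - 1 = j; omega
  right_inv := fun q => by
    apply Subtype.ext; show a + 1 + (q.1 - a - 1) = q.1; have := q.2; omega


section Chain

variable (x : ℝ) (r : ℕ)

/-- summand of the intermediate connected sum -/
def Eterm (t : ℕ) (m : StrictTup t) (j : ℕ) : ℝ :=
  (∏ i, 1 / ((m.1 i : ℝ) - x)) *
    (G x (lastOr0 m.1) (j + 1) / ((((j:ℝ) + 1) - x) * ((j:ℝ) + 1) ^ (r - t)))

/-- the intermediate connected sum -/
def E (t : ℕ) : ℝ≥0∞ := ∑' (m : StrictTup t) (j : ℕ), ENNReal.ofReal (Eterm x r t m j)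

variable {x r}

lemma prod_inv_nonneg {x : ℝ} (hx1 : x < 1) {t : ℕ} (m : StrictTup t) :
    0 ≤ ∏ i, 1 / ((m.1 i : ℝ) - x) := by
  apply Finset.prod_nonneg
  intro i _
  have h1 : (1:ℝ) ≤ (m.1 i : ℝ) := by exact_mod_cast m.2.2 i
  have : (0:ℝ) < (m.1 i : ℝ) - x := by linarith
  positivity

lemma jpow_pos {x : ℝ} (hx1 : x < 1) (j s : ℕ) :
    (0:ℝ) < (((j:ℝ) + 1) - x) * ((j:ℝ) + 1) ^ s := by
  have h0 : (0:ℝ) ≤ (j:ℝ) := Nat.cast_nonneg j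
  have h1 : (0:ℝ) < ((j:ℝ) + 1) - x := by linarith
  positivity

lemma inner_step (hx1 : x < 1) {t : ℕ} (ht : t < r) (m : StrictTup t) (j : ℕ) :
    ∑' u : ℕ, ENNReal.ofReal
        (Eterm x r (t+1) (stSnoc t ⟨m, shiftEquiv (lastOr0 m.1) u⟩) j)
      = ENNReal.ofReal (Eterm x r t m j) := by
  set a := lastOr0 m.1 with ha
  set P : ℝ := ∏ i, 1 / ((m.1 i : ℝ) - x) with hP
  set D : ℝ := (((j:ℝ) + 1) - x) * ((j:ℝ) + 1) ^ (r - (t+1)) with hD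
  have hterm : ∀ u : ℕ,
      Eterm x r (t+1) (stSnoc t ⟨m, shiftEquiv a u⟩) j
        = (P / D) * (1 / (((a:ℝ) + 1 + u) - x) * G x (a + 1 + u) (j + 1)) := by
    intro u
    rw [Eterm]
    have hlast : lastOr0 ((stSnoc t ⟨m, shiftEquiv a u⟩).1) = a + 1 + u :=
      lastOr0_stSnoc m (shiftEquiv a u)
    have hprod : (∏ i, 1 / (((stSnoc t ⟨m, shiftEquiv a u⟩).1 i : ℝ) - x))
        = P * (1 / (((a + 1 + u : ℕ) : ℝ) - x)) := by
      rw [stSnoc_apply, Fin.prod_univ_castSucc]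
      simp only [Fin.snoc_castSucc, Fin.snoc_last]
      rfl
    rw [hprod, hlast]
    have hc : (((a + 1 + u : ℕ)) : ℝ) = (a:ℝ) + 1 + u := by push_cast; ring
    rw [hc, hD]
    ring
  have hPD : 0 ≤ P / D := by
    have := prod_inv_nonneg hx1 m
    have := jpow_pos hx1 j (r - (t+1))
    rw [hP, hD]; positivity
  calc ∑' u : ℕ, ENNReal.ofReal (Eterm x r (t+1) (stSnoc t ⟨m, shiftEquiv a u⟩) j)
      = ∑' u : ℕ, ENNReal.ofReal (P / D) *
          ENNReal.ofReal (1 / (((a:ℝ) + 1 + u) - x) * G x (a + 1 + u) (j + 1)) := by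
        apply tsum_congr; intro u
        rw [hterm u, ENNReal.ofReal_mul hPD]
    _ = ENNReal.ofReal (P / D) * ENNReal.ofReal (G x a (j+1) / ((j + 1 : ℕ) : ℝ)) := by
        rw [ENNReal.tsum_mul_left, key_tsum hx1 a (j+1) (Nat.succ_pos j)]
    _ = ENNReal.ofReal (Eterm x r t m j) := by
        rw [← ENNReal.ofReal_mul hPD, Eterm]
        congr 1
        rw [hP, hD, show r - t = (r - (t+1)) + 1 by omega, pow_succ]
        have h1 : (0:ℝ) < (j:ℝ) + 1 := by positivity
        have h2 := jpow_pos hx1 j (r - (t+1))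
        push_cast
        field_simp
        ring

lemma E_step (hx1 : x < 1) {t : ℕ} (ht : t < r) : E x r (t + 1) = E x r t := by
  rw [E, ← (stSnoc t).tsum_eq (fun m => ∑' j : ℕ, ENNReal.ofReal (Eterm x r (t+1) m j))]
  rw [ENNReal.tsum_sigma']
  rw [E]
  apply tsum_congr; intro m
  rw [ENNReal.tsum_comm]
  apply tsum_congr; intro j
  rw [← (shiftEquiv (lastOr0 m.1)).tsum_eq
    (fun q => ENNReal.ofReal (Eterm x r (t+1) (stSnoc t ⟨m, q⟩) j))]
  exact inner_step hx1 ht m j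

lemma E_top (hx1 : x < 1) (hr : 1 ≤ r) :
    E x r r = ∑' m : StrictTup r, ENNReal.ofReal
      ((∏ i, 1 / ((m.1 i : ℝ) - x)) / (lastOr0 m.1 : ℝ)) := by
  rw [E]
  apply tsum_congr; intro m
  set a := lastOr0 m.1 with ha
  have hapos : 0 < a := lastOr0_pos (by omega) m
  set P : ℝ := ∏ i, 1 / ((m.1 i : ℝ) - x) with hP
  have hPn : 0 ≤ P := prod_inv_nonneg hx1 m
  have hterm : ∀ j : ℕ, Eterm x r r m j
      = P * (1 / (((0:ℕ):ℝ) + 1 + j - x) * G x (0 + 1 + j) a) := by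
    intro j
    rw [Eterm, Nat.sub_self, pow_zero, mul_one, G_comm]
    have : ((0:ℕ):ℝ) + 1 + (j:ℝ) = (j:ℝ) + 1 := by push_cast; ring
    rw [this, show 0 + 1 + j = j + 1 by omega]
    ring
  calc ∑' j : ℕ, ENNReal.ofReal (Eterm x r r m j)
      = ∑' j : ℕ, ENNReal.ofReal P *
          ENNReal.ofReal (1 / (((0:ℕ):ℝ) + 1 + j - x) * G x (0 + 1 + j) a) := by
        apply tsum_congr; intro j
        rw [hterm j, ENNReal.ofReal_mul hPn]
    _ = ENNReal.ofReal P * ENNReal.ofReal (G x 0 a / a) := by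
        rw [ENNReal.tsum_mul_left, key_tsum hx1 0 a hapos]
    _ = ENNReal.ofReal (P / a) := by
        rw [G_zero hx1, ← ENNReal.ofReal_mul hPn]
        congr 1
        ring

lemma E_bot (hx1 : x < 1) :
    E x r 0 = ∑' j : ℕ, ENNReal.ofReal (1 / ((((j:ℝ) + 1) - x) * ((j:ℝ) + 1) ^ r)) := by
  rw [E, tsum_eq_single (default : StrictTup 0) (fun b hb => absurd (Subsingleton.elim b default) hb)]
  apply tsum_congr; intro j
  congr 1
  rw [Eterm]
  have h1 : lastOr0 ((default : StrictTup 0).1) = 0 := by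
    rw [lastOr0, dif_neg (lt_irrefl 0)]
  rw [h1, G_zero hx1]
  have h2 : (∏ i, 1 / (((default : StrictTup 0).1 i : ℝ) - x)) = 1 := by
    simp
  rw [h2, Nat.sub_zero]
  ring

/-- The transported identity `(∗)`. -/
lemma star (hx1 : x < 1) (hr : 1 ≤ r) :
    ∑' m : StrictTup r, ENNReal.ofReal
        ((∏ i, 1 / ((m.1 i : ℝ) - x)) / (lastOr0 m.1 : ℝ))
      = ∑' j : ℕ, ENNReal.ofReal (1 / ((((j:ℝ) + 1) - x) * ((j:ℝ) + 1) ^ r)) := by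
  rw [← E_top hx1 hr, ← E_bot hx1]
  have : ∀ t : ℕ, t ≤ r → E x r t = E x r 0 := by
    intro t
    induction t with
    | zero => intro _; rfl
    | succ t ih => intro h; rw [E_step hx1 (by omega), ih (by omega)]
  exact this r le_rfl

end Chain


section Expand

variable {x : ℝ}

lemma geom_hasSum (hx0 : 0 ≤ x) (hx1 : x < 1) {m : ℕ} (hm : 0 < m) :
    HasSum (fun e : ℕ => x ^ e * ((m:ℝ)⁻¹) ^ (e + 1)) (1 / ((m:ℝ) - x)) := by
  have hm1 : (1:ℝ) ≤ (m:ℝ) := by exact_mod_cast hm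
  have hlt : x / m < 1 := by
    rw [div_lt_one (by linarith)]; linarith
  have hge : 0 ≤ x / m := by positivity
  have h2 := (hasSum_geometric_of_lt_one hge hlt).mul_right ((m:ℝ)⁻¹)
  have he : ∀ e : ℕ, (x / m) ^ e * (m:ℝ)⁻¹ = x ^ e * ((m:ℝ)⁻¹) ^ (e+1) := by
    intro e
    rw [div_pow, pow_succ, inv_pow]
    ring
  have hv : (1 - x / m)⁻¹ * (m:ℝ)⁻¹ = 1 / ((m:ℝ) - x) := by
    have hmne : (m:ℝ) ≠ 0 := by linarith
    have hmx : (m:ℝ) - x ≠ 0 := by linarith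
    have h3 : (1 : ℝ) - x / m = ((m:ℝ) - x) / m := by field_simp
    rw [h3]
    field_simp
  rw [← hv]
  exact (funext he :
    (fun e : ℕ => (x / m) ^ e * (m:ℝ)⁻¹) = fun e : ℕ => x ^ e * ((m:ℝ)⁻¹) ^ (e+1)) ▸ h2

lemma geom_tsum (hx0 : 0 ≤ x) (hx1 : x < 1) {m : ℕ} (hm : 0 < m) :
    ENNReal.ofReal (1 / ((m:ℝ) - x)) =
      ∑' e : ℕ, ENNReal.ofReal (x ^ e * ((m:ℝ)⁻¹) ^ (e + 1)) := by
  rw [← ENNReal.ofReal_tsum_of_nonneg (fun e => by positivity)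
    (geom_hasSum hx0 hx1 hm).summable, (geom_hasSum hx0 hx1 hm).tsum_eq]

lemma tsum_prod_fin : ∀ (n : ℕ) (f : Fin n → ℕ → ℝ≥0∞),
    (∏ i, ∑' e : ℕ, f i e) = ∑' e : Fin n → ℕ, ∏ i, f i (e i) := by
  intro n
  induction n with
  | zero =>
      intro f
      rw [tsum_eq_single (default : Fin 0 → ℕ)
        (fun b hb => absurd (Subsingleton.elim b default) hb)]
      simp
  | succ n ih =>
      intro f
      rw [Fin.prod_univ_succ, ih (fun i => f i.succ)]
      rw [← (Fin.consEquiv (fun _ : Fin (n+1) => ℕ)).tsum_eq (fun g => ∏ i, f i (g i))]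
      refine Eq.symm ?_
      calc ∑' p : ℕ × (Fin n → ℕ),
            (fun g : Fin (n+1) → ℕ => ∏ i, f i (g i)) ((Fin.consEquiv (fun _ => ℕ)) p)
          = ∑' p : ℕ × (Fin n → ℕ), f 0 p.1 * ∏ i : Fin n, f i.succ (p.2 i) := by
            refine tsum_congr fun p => ?_
            obtain ⟨k, e⟩ := p
            show (∏ i, f i ((Fin.cons k e : Fin (n+1) → ℕ) i)) = _
            rw [Fin.prod_univ_succ]
            simp [Fin.cons_succ]
        _ = ∑' (k : ℕ) (e : Fin n → ℕ), f 0 k * ∏ i : Fin n, f i.succ (e i) :=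
            ENNReal.tsum_prod (f := fun (a : ℕ) (b : Fin n → ℕ) => f 0 a * ∏ i : Fin n, f i.succ (b i))
        _ = (∑' k : ℕ, f 0 k) * ∑' e : Fin n → ℕ, ∏ i : Fin n, f i.succ (e i) := by
            rw [← ENNReal.tsum_mul_right]
            exact tsum_congr fun k => ENNReal.tsum_mul_left

/-- the `c`-th coefficient of the left-hand side -/
def Acoef (r c : ℕ) : ℝ≥0∞ :=
  ∑' e : {e : Fin r → ℕ // ∑ i, e i = c}, ∑' m : StrictTup r,
    ENNReal.ofReal ((∏ i, ((m.1 i:ℝ))⁻¹ ^ (e.1 i + 1)) * ((lastOr0 m.1 : ℝ))⁻¹)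

/-- the `c`-th coefficient of the right-hand side -/
def Bcoef (r c : ℕ) : ℝ≥0∞ :=
  ∑' j : ℕ, ENNReal.ofReal ((((j:ℝ) + 1)⁻¹) ^ (c + r + 1))

lemma expand_prod (hx0 : 0 ≤ x) (hx1 : x < 1) {r : ℕ} (m : StrictTup r) :
    ENNReal.ofReal (∏ i, 1 / ((m.1 i : ℝ) - x))
      = ∑' e : Fin r → ℕ, ENNReal.ofReal
          (x ^ (∑ i, e i) * ∏ i, ((m.1 i:ℝ))⁻¹ ^ (e i + 1)) := by
  have hnn : ∀ i ∈ Finset.univ (α := Fin r), (0:ℝ) ≤ 1 / ((m.1 i : ℝ) - x) := by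
    intro i _
    have h1 : (1:ℝ) ≤ (m.1 i : ℝ) := by exact_mod_cast m.2.2 i
    have : (0:ℝ) < (m.1 i : ℝ) - x := by linarith
    positivity
  rw [ENNReal.ofReal_prod_of_nonneg hnn]
  have h1 : ∀ i : Fin r, ENNReal.ofReal (1 / ((m.1 i : ℝ) - x))
      = ∑' e : ℕ, ENNReal.ofReal (x ^ e * ((m.1 i:ℝ)⁻¹) ^ (e + 1)) :=
    fun i => geom_tsum hx0 hx1 (m.2.2 i)
  calc (∏ i, ENNReal.ofReal (1 / ((m.1 i : ℝ) - x)))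
      = ∏ i, ∑' e : ℕ, ENNReal.ofReal (x ^ e * ((m.1 i:ℝ)⁻¹) ^ (e + 1)) :=
        Finset.prod_congr rfl fun i _ => h1 i
    _ = ∑' e : Fin r → ℕ, ∏ i, ENNReal.ofReal (x ^ (e i) * ((m.1 i:ℝ)⁻¹) ^ (e i + 1)) :=
        tsum_prod_fin r _
    _ = ∑' e : Fin r → ℕ, ENNReal.ofReal
          (x ^ (∑ i, e i) * ∏ i, ((m.1 i:ℝ))⁻¹ ^ (e i + 1)) := by
        refine tsum_congr fun e => ?_
        rw [← ENNReal.ofReal_prod_of_nonneg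
          (fun i _ => mul_nonneg (pow_nonneg hx0 _) (by positivity))]
        congr 1
        rw [Finset.prod_mul_distrib, Finset.prod_pow_eq_pow_sum]

lemma LHS_expand (hx0 : 0 ≤ x) (hx1 : x < 1) {r : ℕ} :
    ∑' m : StrictTup r, ENNReal.ofReal
        ((∏ i, 1 / ((m.1 i : ℝ) - x)) / (lastOr0 m.1 : ℝ))
      = ∑' c : ℕ, (ENNReal.ofReal x) ^ c * Acoef r c := by
  have step1 : ∀ m : StrictTup r,
      ENNReal.ofReal ((∏ i, 1 / ((m.1 i : ℝ) - x)) / (lastOr0 m.1 : ℝ))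
        = ∑' e : Fin r → ℕ, ENNReal.ofReal
            (x ^ (∑ i, e i) * ((∏ i, ((m.1 i:ℝ))⁻¹ ^ (e i + 1)) * ((lastOr0 m.1 : ℝ))⁻¹)) := by
    intro m
    have hP : (0:ℝ) ≤ ∏ i, 1 / ((m.1 i : ℝ) - x) := prod_inv_nonneg hx1 m
    rw [div_eq_mul_inv, ENNReal.ofReal_mul hP, expand_prod hx0 hx1 m,
      ← ENNReal.tsum_mul_right]
    refine tsum_congr fun e => ?_
    rw [← ENNReal.ofReal_mul (mul_nonneg (pow_nonneg hx0 _) (by positivity))]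
    congr 1
    ring
  calc ∑' m : StrictTup r, ENNReal.ofReal
        ((∏ i, 1 / ((m.1 i : ℝ) - x)) / (lastOr0 m.1 : ℝ))
      = ∑' (m : StrictTup r) (e : Fin r → ℕ), ENNReal.ofReal
          (x ^ (∑ i, e i) * ((∏ i, ((m.1 i:ℝ))⁻¹ ^ (e i + 1)) * ((lastOr0 m.1 : ℝ))⁻¹)) :=
        tsum_congr step1
    _ = ∑' (e : Fin r → ℕ) (m : StrictTup r), ENNReal.ofReal
          (x ^ (∑ i, e i) * ((∏ i, ((m.1 i:ℝ))⁻¹ ^ (e i + 1)) * ((lastOr0 m.1 : ℝ))⁻¹)) :=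
        ENNReal.tsum_comm
    _ = ∑' (p : Σ c : ℕ, {e : Fin r → ℕ // ∑ i, e i = c}) (m : StrictTup r),
          ENNReal.ofReal
          (x ^ (∑ i, p.2.1 i) * ((∏ i, ((m.1 i:ℝ))⁻¹ ^ (p.2.1 i + 1)) * ((lastOr0 m.1 : ℝ))⁻¹)) := by
        rw [← (Equiv.sigmaFiberEquiv (fun e : Fin r → ℕ => ∑ i, e i)).tsum_eq]
        rfl
    _ = ∑' c : ℕ, (ENNReal.ofReal x) ^ c * Acoef r c := by
        rw [ENNReal.tsum_sigma']
        refine tsum_congr fun c => ?_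
        rw [Acoef, ← ENNReal.tsum_mul_left]
        refine tsum_congr fun e => ?_
        rw [← ENNReal.tsum_mul_left]
        refine tsum_congr fun m => ?_
        rw [e.2, ← ENNReal.ofReal_pow hx0, ← ENNReal.ofReal_mul (pow_nonneg hx0 _)]

lemma RHS_expand (hx0 : 0 ≤ x) (hx1 : x < 1) {r : ℕ} :
    ∑' j : ℕ, ENNReal.ofReal (1 / ((((j:ℝ) + 1) - x) * ((j:ℝ) + 1) ^ r))
      = ∑' c : ℕ, (ENNReal.ofReal x) ^ c * Bcoef r c := by
  have step1 : ∀ j : ℕ,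
      ENNReal.ofReal (1 / ((((j:ℝ) + 1) - x) * ((j:ℝ) + 1) ^ r))
        = ∑' c : ℕ, (ENNReal.ofReal x) ^ c *
            ENNReal.ofReal ((((j:ℝ) + 1)⁻¹) ^ (c + r + 1)) := by
    intro j
    have hj1 : (0:ℝ) < (j:ℝ) + 1 := by positivity
    have hjx : (0:ℝ) < ((j:ℝ) + 1) - x := by
      have := Nat.cast_nonneg (α := ℝ) j; linarith
    have hsplit : 1 / ((((j:ℝ) + 1) - x) * ((j:ℝ) + 1) ^ r)
        = (1 / (((j + 1 : ℕ):ℝ) - x)) * (((j:ℝ) + 1)⁻¹) ^ r := by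
      push_cast
      rw [one_div, one_div, mul_inv, inv_pow]
    rw [hsplit, ENNReal.ofReal_mul (one_div_nonneg.2 (by push_cast; linarith)),
      geom_tsum hx0 hx1 (Nat.succ_pos j),
      ← ENNReal.tsum_mul_right]
    refine tsum_congr fun c => ?_
    rw [← ENNReal.ofReal_mul (mul_nonneg (pow_nonneg hx0 _) (by positivity)),
      ← ENNReal.ofReal_pow hx0,
      ← ENNReal.ofReal_mul (pow_nonneg hx0 _)]
    congr 1
    push_cast
    rw [show c + r + 1 = (c + 1) + r by omega, pow_add]
    ring
  rw [tsum_congr step1, ENNReal.tsum_comm]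
  refine tsum_congr fun c => ?_
  rw [Bcoef, ← ENNReal.tsum_mul_left]

end Expand


section Unique

lemma shift_summable {f : ℕ → ℝ} (hf : ∀ c, 0 ≤ f c)
    (hs : Summable fun c => f c * (2⁻¹:ℝ)^c) (k : ℕ) {x : ℝ} (hx0 : 0 ≤ x)
    (hx : x ≤ 2⁻¹) : Summable fun c => f (c + k) * x ^ c := by
  have h1 : Summable fun c => f (c + k) * (2⁻¹:ℝ)^(c+k) :=
    (summable_nat_add_iff k).2 hs
  have h2 : Summable fun c => (f (c + k) * (2⁻¹:ℝ)^(c+k)) * 2^k := h1.mul_right _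
  apply Summable.of_nonneg_of_le (fun c => mul_nonneg (hf _) (by positivity)) ?_ h2
  intro c
  have hxc : x ^ c ≤ (2⁻¹:ℝ)^c := pow_le_pow_left₀ hx0 hx c
  have h3 : (2⁻¹:ℝ)^(c+k) * 2^k = (2⁻¹:ℝ)^c := by
    rw [pow_add]
    have : (2⁻¹:ℝ)^k * 2^k = 1 := by
      rw [← mul_pow]; norm_num
    rw [mul_assoc, this, mul_one]
  calc f (c+k) * x^c ≤ f (c+k) * (2⁻¹:ℝ)^c := by
        have := hf (c+k); nlinarith
    _ = f (c + k) * (2⁻¹:ℝ)^(c+k) * 2^k := by rw [mul_assoc, h3]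

lemma tail_le {f : ℕ → ℝ} (hf : ∀ c, 0 ≤ f c)
    (hs : Summable fun c => f c * (2⁻¹:ℝ)^c) (k : ℕ) {x : ℝ} (hx0 : 0 ≤ x)
    (hx : x ≤ 4⁻¹) :
    ∑' c, f (c + k) * x ^ c ≤ ∑' c, f (c + k) * (4⁻¹:ℝ) ^ c := by
  apply Summable.tsum_le_tsum ?_ (shift_summable hf hs k hx0 (by linarith))
    (shift_summable hf hs k (by norm_num) (by norm_num))
  intro c
  have hxc : x ^ c ≤ (4⁻¹:ℝ)^c := pow_le_pow_left₀ hx0 hx c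
  have := hf (c+k); nlinarith

lemma coeff_le {a b : ℕ → ℝ} (ha : ∀ c, 0 ≤ a c) (hb : ∀ c, 0 ≤ b c)
    (hsa : Summable fun c => a c * (2⁻¹:ℝ)^c) (hsb : Summable fun c => b c * (2⁻¹:ℝ)^c)
    (n : ℕ) (ihn : ∀ m, m < n → a m = b m)
    (key : ∀ x : ℝ, 0 < x → x < 4⁻¹ →
      a n + x * ∑' c, a (c + (n+1)) * x ^ c = b n + x * ∑' c, b (c + (n+1)) * x ^ c) :
    a n ≤ b n := by
  set CB : ℝ := ∑' c, b (c + (n+1)) * (4⁻¹:ℝ) ^ c with hCB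
  have hCB0 : 0 ≤ CB := tsum_nonneg (fun c => mul_nonneg (hb _) (by positivity))
  have hle : ∀ x : ℝ, 0 < x → x < 4⁻¹ → a n ≤ b n + x * CB := by
    intro x hx0 hx4
    have hk := key x hx0 hx4
    have hA0 : 0 ≤ ∑' c, a (c + (n+1)) * x ^ c :=
      tsum_nonneg (fun c => mul_nonneg (ha _) (by positivity))
    have hBle : ∑' c, b (c + (n+1)) * x ^ c ≤ CB := tail_le hb hsb (n+1) hx0.le hx4.le
    nlinarith
  apply le_of_forall_pos_le_add
  intro ε hε
  rcases le_or_gt (CB) 0 with hC | hC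
  · have := hle (8⁻¹) (by norm_num) (by norm_num)
    nlinarith
  · set x := min (8⁻¹ : ℝ) (ε / (2 * CB)) with hx
    have hx0 : 0 < x := lt_min (by norm_num) (div_pos hε (by linarith))
    have hx4 : x < 4⁻¹ := lt_of_le_of_lt (min_le_left _ _) (by norm_num)
    have h1 := hle x hx0 hx4
    have h2 : x * CB ≤ ε / 2 := by
      have hxle : x ≤ ε / (2 * CB) := min_le_right _ _
      calc x * CB ≤ (ε / (2 * CB)) * CB := by nlinarith
        _ = ε / 2 := by field_simp
    linarith

lemma coeff_unique {a b : ℕ → ℝ} (ha : ∀ c, 0 ≤ a c) (hb : ∀ c, 0 ≤ b c)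
    (hsa : Summable fun c => a c * (2⁻¹:ℝ)^c) (hsb : Summable fun c => b c * (2⁻¹:ℝ)^c)
    (h : ∀ x : ℝ, 0 < x → x < 2⁻¹ → ∑' c, a c * x^c = ∑' c, b c * x^c) : a = b := by
  funext n
  induction n using Nat.strong_induction_on with
  | _ n ihn =>
  have key : ∀ x : ℝ, 0 < x → x < 4⁻¹ →
      a n + x * ∑' c, a (c + (n+1)) * x ^ c = b n + x * ∑' c, b (c + (n+1)) * x ^ c := by
    intro x hx0 hx4
    have hx2 : x < 2⁻¹ := by linarith
    have hsax : Summable fun c => a c * x ^ c := by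
      have := shift_summable ha hsa 0 hx0.le hx2.le
      simpa using this
    have hsbx : Summable fun c => b c * x ^ c := by
      have := shift_summable hb hsb 0 hx0.le hx2.le
      simpa using this
    have hsplit : ∀ (f : ℕ → ℝ), (Summable fun c => f c * x ^ c) →
        ∑' c, f c * x ^ c = ∑ i ∈ Finset.range n, f i * x ^ i +
          (f n * x ^ n + x ^ (n+1) * ∑' c, f (c + (n+1)) * x ^ c) := by
      intro f hsf
      rw [← hsf.sum_add_tsum_nat_add (n+1), Finset.sum_range_succ]
      have htail : ∑' (c : ℕ), f (c + (n+1)) * x ^ (c + (n+1))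
          = x ^ (n+1) * ∑' c, f (c + (n+1)) * x ^ c := by
        rw [← tsum_mul_left]
        exact tsum_congr fun c => by rw [pow_add]; ring
      rw [htail]
      ring
    have heq := h x hx0 hx2
    rw [hsplit a hsax, hsplit b hsbx] at heq
    have hsums : ∑ i ∈ Finset.range n, a i * x ^ i = ∑ i ∈ Finset.range n, b i * x ^ i :=
      Finset.sum_congr rfl fun i hi => by rw [ihn i (Finset.mem_range.1 hi)]
    rw [hsums] at heq
    have h2 : a n * x ^ n + x ^ (n+1) * ∑' c, a (c + (n+1)) * x ^ c
        = b n * x ^ n + x ^ (n+1) * ∑' c, b (c + (n+1)) * x ^ c := by linarith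
    have hxn : (0:ℝ) < x ^ n := by positivity
    have h3 : x ^ (n+1) = x ^ n * x := pow_succ x n
    rw [h3] at h2
    have h4 : x ^ n * (a n + x * ∑' c, a (c + (n+1)) * x ^ c)
        = x ^ n * (b n + x * ∑' c, b (c + (n+1)) * x ^ c) := by ring_nf; ring_nf at h2; linarith
    exact mul_left_cancel₀ hxn.ne' h4
  have key' : ∀ x : ℝ, 0 < x → x < 4⁻¹ →
      b n + x * ∑' c, b (c + (n+1)) * x ^ c = a n + x * ∑' c, a (c + (n+1)) * x ^ c :=
    fun x h1 h2 => (key x h1 h2).symm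
  exact le_antisymm (coeff_le ha hb hsa hsb n ihn key)
    (coeff_le hb ha hsb hsa n (fun m hm => (ihn m hm).symm) key')

end Unique


section Bridge

lemma inv_pow_bridge {m : ℕ} (hm : 0 < m) (k : ℕ) :
    (1 : ℝ≥0∞) / (m : ℝ≥0∞) ^ k = ENNReal.ofReal (((m:ℝ))⁻¹ ^ k) := by
  have hm0 : (0:ℝ) < (m:ℝ) := by exact_mod_cast hm
  rw [ENNReal.ofReal_pow (by positivity), ENNReal.ofReal_inv_of_pos hm0,
    ENNReal.ofReal_natCast, one_div, ENNReal.inv_pow]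

lemma prod_bridge {r : ℕ} (m : StrictTup r) (k : Fin r → ℕ) :
    (∏ i, 1 / (m.1 i : ℝ≥0∞) ^ k i) = ENNReal.ofReal (∏ i, ((m.1 i : ℝ))⁻¹ ^ k i) := by
  rw [ENNReal.ofReal_prod_of_nonneg (fun i _ => by positivity)]
  exact Finset.prod_congr rfl fun i _ => inv_pow_bridge (m.2.2 i) (k i)

lemma mzeta_eq_aux (l : List ℕ) {r : ℕ} (h : l.length = r) (k : Fin r → ℕ)
    (hk : ∀ i : Fin l.length, l.get i = k (Fin.cast h i)) :
    mzeta l = ∑' m : StrictTup r, ENNReal.ofReal (∏ i, ((m.1 i : ℝ))⁻¹ ^ k i) := by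
  subst h
  rw [mzeta]
  refine tsum_congr fun m => ?_
  calc (∏ i, 1 / (m.1 i : ℝ≥0∞) ^ l.get i)
      = ∏ i, 1 / (m.1 i : ℝ≥0∞) ^ k i :=
        Finset.prod_congr rfl fun i _ => by rw [hk i]; rfl
    _ = ENNReal.ofReal (∏ i, ((m.1 i : ℝ))⁻¹ ^ k i) := prod_bridge m k

lemma mzeta_ofFn {r : ℕ} (k : Fin r → ℕ) :
    mzeta (List.ofFn k) = ∑' m : StrictTup r, ENNReal.ofReal (∏ i, ((m.1 i : ℝ))⁻¹ ^ k i) :=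
  mzeta_eq_aux (List.ofFn k) List.length_ofFn k (fun i => List.get_ofFn k i)

/-- `ℕ ≃ StrictTup 1` -/
def stOne : ℕ ≃ StrictTup 1 where
  toFun j := ⟨fun _ => j + 1,
    fun a b hab => absurd (Subsingleton.elim a b) (ne_of_lt hab),
    fun _ => Nat.succ_pos j⟩
  invFun m := m.1 0 - 1
  left_inv j := by simp
  right_inv m := by
    apply Subtype.ext
    funext i
    have h1 : i = 0 := Subsingleton.elim i 0
    subst h1
    show m.1 0 - 1 + 1 = m.1 0
    have := m.2.2 0
    omega

lemma mzeta_single (s : ℕ) :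
    mzeta [s] = ∑' j : ℕ, ENNReal.ofReal ((((j:ℝ) + 1)⁻¹) ^ s) := by
  rw [mzeta_eq_aux [s] (by simp) (fun _ : Fin 1 => s) (fun i => by
    rcases i with ⟨v, hv⟩
    have hv1 : v < 1 := by simpa using hv
    have : v = 0 := by omega
    subst this
    rfl)]
  rw [← stOne.tsum_eq]
  refine tsum_congr fun j => ?_
  congr 1
  rw [Fin.prod_univ_one]
  show (((stOne j).1 0 : ℝ))⁻¹ ^ s = _
  have : (stOne j).1 0 = j + 1 := rfl
  rw [this]
  push_cast
  ring

lemma Bcoef_eq (r c : ℕ) : Bcoef r c = mzeta [c + r + 1] := by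
  rw [Bcoef, mzeta_single]

variable {r : ℕ}

/-- the index built from an exponent tuple -/
def kOf (hr : 1 ≤ r) (e : Fin r → ℕ) : Fin r → ℕ :=
  fun i => e i + 1 + (if i = (⟨r - 1, by omega⟩ : Fin r) then 1 else 0)

lemma sum_kOf (hr : 1 ≤ r) (e : Fin r → ℕ) : ∑ i, kOf hr e i = (∑ i, e i) + r + 1 := by
  simp only [kOf]
  rw [Finset.sum_add_distrib, Finset.sum_add_distrib, Finset.sum_const, Finset.card_univ,
    Fintype.card_fin, smul_eq_mul, mul_one, Finset.sum_ite_eq']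
  simp

lemma prod_kOf (hr : 1 ≤ r) (e : Fin r → ℕ) (m : StrictTup r) :
    (∏ i, ((m.1 i : ℝ))⁻¹ ^ (e i + 1)) * ((lastOr0 m.1 : ℝ))⁻¹
      = ∏ i, ((m.1 i : ℝ))⁻¹ ^ (kOf hr e i) := by
  have h1 : ∀ i, ((m.1 i : ℝ))⁻¹ ^ (kOf hr e i)
      = ((m.1 i : ℝ))⁻¹ ^ (e i + 1) *
        (if i = (⟨r - 1, by omega⟩ : Fin r) then ((m.1 i : ℝ))⁻¹ else 1) := by
    intro i
    simp only [kOf]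
    rw [pow_add]
    congr 1
    split_ifs <;> simp
  rw [Finset.prod_congr rfl (fun i _ => h1 i), Finset.prod_mul_distrib]
  congr 1
  rw [Finset.prod_ite_eq' Finset.univ (⟨r - 1, by omega⟩ : Fin r)
    (fun i => ((m.1 i : ℝ))⁻¹)]
  rw [if_pos (Finset.mem_univ _)]
  have : lastOr0 m.1 = m.1 (⟨r - 1, by omega⟩ : Fin r) := by
    rw [lastOr0, dif_pos (by omega : 0 < r)]
  rw [this]

/-- equivalence between exponent tuples of weight `c` and admissible indices of
weight `c + r + 1`. -/
def ekEquiv (hr : 1 ≤ r) (c : ℕ) :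
    {e : Fin r → ℕ // ∑ i, e i = c} ≃
      {k : Fin r → ℕ // (∀ i, 0 < k i) ∧ 2 ≤ k ⟨r - 1, by omega⟩ ∧ ∑ i, k i = c + r + 1} :=
  Equiv.ofBijective
    (fun e => ⟨kOf hr e.1,
      fun i => by simp only [kOf]; split_ifs <;> omega,
      by
        simp only [kOf]
        split_ifs <;> omega,
      by rw [sum_kOf hr e.1, e.2]⟩)
    (by
      constructor
      · rintro ⟨e, he⟩ ⟨e', he'⟩ h
        have h2 := congrArg Subtype.val h
        apply Subtype.ext
        funext i
        have h3 := congrFun h2 i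
        simp only [kOf] at h3
        show e i = e' i
        split_ifs at h3 <;> omega
      · rintro ⟨k, hk1, hk2, hk3⟩
        have hfun : kOf hr
            (fun i => k i - 1 - (if i = (⟨r - 1, by omega⟩ : Fin r) then 1 else 0)) = k := by
          funext i
          simp only [kOf]
          split_ifs with hi
          · rw [hi]
            have := hk2
            omega
          · have := hk1 i
            omega
        refine ⟨⟨fun i => k i - 1 - (if i = (⟨r - 1, by omega⟩ : Fin r) then 1 else 0), ?_⟩,
          Subtype.ext hfun⟩
        have hsum := sum_kOf hr
          (fun i => k i - 1 - (if i = (⟨r - 1, by omega⟩ : Fin r) then 1 else 0))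
        rw [hfun] at hsum
        show (∑ i, (k i - 1 - if i = (⟨r - 1, by omega⟩ : Fin r) then 1 else 0)) = c
        omega)

lemma Acoef_eq (hr : 1 ≤ r) (c : ℕ) :
    Acoef r c = ∑' k : {k : Fin r → ℕ //
        (∀ i, 0 < k i) ∧ 2 ≤ k ⟨r - 1, by omega⟩ ∧ ∑ i, k i = c + r + 1},
      mzeta (List.ofFn k.1) := by
  rw [Acoef, ← (ekEquiv hr c).tsum_eq (fun k => mzeta (List.ofFn k.1))]
  refine tsum_congr fun e => ?_
  show _ = mzeta (List.ofFn (kOf hr e.1))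
  rw [mzeta_ofFn]
  refine tsum_congr fun m => ?_
  rw [← prod_kOf hr e.1 m]

end Bridge

section Assemble

variable {r : ℕ}

lemma series_eq (hr : 1 ≤ r) {x : ℝ} (hx0 : 0 ≤ x) (hx1 : x < 1) :
    ∑' c : ℕ, (ENNReal.ofReal x) ^ c * Acoef r c
      = ∑' c : ℕ, (ENNReal.ofReal x) ^ c * Bcoef r c := by
  rw [← LHS_expand hx0 hx1, ← RHS_expand hx0 hx1, star hx1 hr]

set_option maxHeartbeats 2000000 in
lemma total_finite (hr : 1 ≤ r) :
    ∑' c : ℕ, (ENNReal.ofReal (2⁻¹:ℝ)) ^ c * Bcoef r c ≠ ⊤ := by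
  rw [← RHS_expand (x := (2⁻¹:ℝ)) (r := r) (by norm_num) (by norm_num)]
  have hbound : ∀ j : ℕ,
      ENNReal.ofReal (1 / ((((j:ℝ) + 1) - 2⁻¹) * ((j:ℝ) + 1) ^ r))
        ≤ ENNReal.ofReal (2 / ((j:ℝ) + 1) ^ 2) := by
    intro j
    apply ENNReal.ofReal_le_ofReal
    have hj : (0:ℝ) ≤ (j:ℝ) := Nat.cast_nonneg j
    have hj1 : (1:ℝ) ≤ (j:ℝ) + 1 := by linarith
    have hp : ((j:ℝ) + 1) ^ 1 ≤ ((j:ℝ) + 1) ^ r := pow_le_pow_right₀ hj1 hr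
    rw [pow_one] at hp
    have hD : ((j:ℝ) + 1) ^ 2 / 2 ≤ (((j:ℝ) + 1) - 2⁻¹) * ((j:ℝ) + 1) ^ r := by
      have h2 : ((j:ℝ) + 1) / 2 ≤ ((j:ℝ) + 1) - 2⁻¹ := by linarith
      have h3 : (0:ℝ) < (j:ℝ) + 1 := by linarith
      calc ((j:ℝ) + 1) ^ 2 / 2 = (((j:ℝ) + 1) / 2) * ((j:ℝ) + 1) := by ring
        _ ≤ (((j:ℝ) + 1) - 2⁻¹) * ((j:ℝ) + 1) ^ r := by nlinarith
    have hpos : (0:ℝ) < ((j:ℝ) + 1) ^ 2 / 2 := by positivity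
    calc 1 / ((((j:ℝ) + 1) - 2⁻¹) * ((j:ℝ) + 1) ^ r)
        ≤ 1 / (((j:ℝ) + 1) ^ 2 / 2) := by
          apply one_div_le_one_div_of_le hpos hD
      _ = 2 / ((j:ℝ) + 1) ^ 2 := by
          rw [div_div_eq_mul_div, one_mul]
  have hsum2 : Summable (fun j : ℕ => 2 / ((j:ℝ) + 1) ^ 2) := by
    have h1 : Summable (fun n : ℕ => 1 / (n:ℝ) ^ 2) :=
      Real.summable_one_div_nat_pow.2 one_lt_two
    have h2 : Summable (fun j : ℕ => 1 / ((j:ℝ) + 1) ^ 2) := by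
      have := (summable_nat_add_iff 1).2 h1
      exact this.congr fun j => by push_cast; ring_nf
    exact (h2.mul_left 2).congr fun j => by rw [mul_one_div]
  have hle := ENNReal.tsum_le_tsum hbound
  have hfin : ∑' j : ℕ, ENNReal.ofReal (2 / ((j:ℝ) + 1) ^ 2) ≠ ⊤ := by
    rw [← ENNReal.ofReal_tsum_of_nonneg (fun j => by positivity) hsum2]
    exact ENNReal.ofReal_ne_top
  exact ne_top_of_le_ne_top hfin hle

lemma coef_ne_top (hr : 1 ≤ r) {f : ℕ → ℝ≥0∞}
    (hfin : ∑' c : ℕ, (ENNReal.ofReal (2⁻¹:ℝ)) ^ c * f c ≠ ⊤) (c : ℕ) : f c ≠ ⊤ := by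
  intro hc
  have hterm : (ENNReal.ofReal (2⁻¹:ℝ)) ^ c * f c ≠ ⊤ :=
    ne_top_of_le_ne_top hfin (ENNReal.le_tsum c)
  have hne : (ENNReal.ofReal (2⁻¹:ℝ)) ^ c ≠ 0 :=
    pow_ne_zero c (by simp [ENNReal.ofReal_eq_zero])
  rw [hc, ENNReal.mul_top hne] at hterm
  exact hterm rfl

lemma Acoef_eq_Bcoef (hr : 1 ≤ r) (c : ℕ) : Acoef r c = Bcoef r c := by
  have hBfin := total_finite hr
  have hAfin : ∑' c : ℕ, (ENNReal.ofReal (2⁻¹:ℝ)) ^ c * Acoef r c ≠ ⊤ := by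
    rw [series_eq hr (by norm_num) (by norm_num)]
    exact hBfin
  have hAc := coef_ne_top hr hAfin
  have hBc := coef_ne_top hr hBfin
  set a : ℕ → ℝ := fun c => (Acoef r c).toReal with haa
  set b : ℕ → ℝ := fun c => (Bcoef r c).toReal with hbb
  have hterm : ∀ (f : ℕ → ℝ≥0∞) (x : ℝ), 0 ≤ x → ∀ c,
      ((ENNReal.ofReal x) ^ c * f c).toReal = (f c).toReal * x ^ c := by
    intro f x hx c
    rw [ENNReal.toReal_mul, ENNReal.toReal_pow, ENNReal.toReal_ofReal hx, mul_comm]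
  have hsa : Summable fun c => a c * (2⁻¹:ℝ)^c := by
    have := ENNReal.summable_toReal hAfin
    exact this.congr fun c => hterm (Acoef r) (2⁻¹:ℝ) (by norm_num) c
  have hsb : Summable fun c => b c * (2⁻¹:ℝ)^c := by
    have := ENNReal.summable_toReal hBfin
    exact this.congr fun c => hterm (Bcoef r) (2⁻¹:ℝ) (by norm_num) c
  have heq : ∀ x : ℝ, 0 < x → x < 2⁻¹ → ∑' c, a c * x^c = ∑' c, b c * x^c := by
    intro x hx0 hx2
    have hx1 : x < 1 := by linarith [show (2⁻¹:ℝ) < 1 by norm_num]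
    have hAx : ∀ c : ℕ, (ENNReal.ofReal x) ^ c * Acoef r c ≠ ⊤ :=
      fun c => ENNReal.mul_ne_top (ENNReal.pow_ne_top ENNReal.ofReal_ne_top) (hAc c)
    have hBx : ∀ c : ℕ, (ENNReal.ofReal x) ^ c * Bcoef r c ≠ ⊤ :=
      fun c => ENNReal.mul_ne_top (ENNReal.pow_ne_top ENNReal.ofReal_ne_top) (hBc c)
    calc ∑' c, a c * x^c
        = (∑' c : ℕ, (ENNReal.ofReal x) ^ c * Acoef r c).toReal := by
          rw [ENNReal.tsum_toReal_eq hAx]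
          exact tsum_congr fun c => (hterm (Acoef r) x hx0.le c).symm
      _ = (∑' c : ℕ, (ENNReal.ofReal x) ^ c * Bcoef r c).toReal := by
          rw [series_eq hr hx0.le hx1]
      _ = ∑' c, b c * x^c := by
          rw [ENNReal.tsum_toReal_eq hBx]
          exact tsum_congr fun c => hterm (Bcoef r) x hx0.le c
  have ha0 : ∀ c, 0 ≤ a c := fun c => ENNReal.toReal_nonneg
  have hb0 : ∀ c, 0 ≤ b c := fun c => ENNReal.toReal_nonneg
  have hab := coeff_unique ha0 hb0 hsa hsb heq
  have : a c = b c := by rw [hab]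
  exact (ENNReal.toReal_eq_toReal_iff' (hAc c) (hBc c)).1 this

end Assemble

end SumFormulaAux
end

/-- **Sum formula for multiple zeta values.**  For `n > r ≥ 1`, the sum of
`ζ(k₁,…,k_r)` over all admissible indices of depth `r` and weight `n` equals `ζ(n)`. -/
theorem sum_formula (n r : ℕ) (hr : 1 ≤ r) (hn : r < n) :
    ∑' k : {k : Fin r → ℕ //
        (∀ i, 0 < k i) ∧ 2 ≤ k ⟨r - 1, by omega⟩ ∧ ∑ i, k i = n},
      mzeta (List.ofFn k.1) = mzeta [n] := by
  obtain ⟨c, rfl⟩ : ∃ c, n = c + r + 1 := ⟨n - r - 1, by omega⟩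
  exact (SumFormulaAux.Acoef_eq hr c).symm.trans
    ((SumFormulaAux.Acoef_eq_Bcoef hr c).trans (SumFormulaAux.Bcoef_eq r c))

end
end

section
/- Classical connected sum duality: for every admissible index k with dual index k†, the classical connected sums satisfy Z(k; ∅) = Z(∅; k†); equivalently, since Z(k; ∅) = ζ(k) and Z(∅; k†) = ζ(k†), the chain of transfer identities applied wt(k) times yields ζ(k) = ζ(k†). -/
open scoped ENNReal

noncomputable section

namespace CSD
open scoped NNReal


def C (m n : ℕ) : ℝ≥0∞ :=
  (Nat.factorial m : ℝ≥0∞) * (Nat.factorial n) / (Nat.factorial (m + n))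

lemma C_eq_ofReal (m n : ℕ) :
    C m n = ENNReal.ofReal ((m.factorial : ℝ) * n.factorial / (m + n).factorial) := by
  rw [ENNReal.ofReal_div_of_pos (by positivity), ENNReal.ofReal_mul (by positivity)]
  simp [C]

lemma C_zero_right (m : ℕ) : C m 0 = 1 := by
  have h0 : ((m + 0).factorial : ℝ≥0∞) ≠ 0 := by
    exact_mod_cast (m + 0).factorial_ne_zero
  simp only [C, Nat.factorial_zero, Nat.cast_one, mul_one, Nat.add_zero]
  exact ENNReal.div_self (by exact_mod_cast m.factorial_ne_zero) (by simp)

lemma C_comm (m n : ℕ) : C m n = C n m := by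
  rw [C, C, mul_comm, Nat.add_comm]

lemma key_id (m b : ℕ) (hm : 1 ≤ m) :
    (1 / ((b : ℝ≥0∞) + 1)) * C m (b + 1) + (1 / m) * C m (b + 1) = (1 / m) * C m b := by
  have hb1 : ((b : ℝ≥0∞) + 1) = ((b + 1 : ℕ) : ℝ≥0∞) := by push_cast; ring
  rw [hb1, C_eq_ofReal m (b+1), C_eq_ofReal m b]
  rw [show (1 : ℝ≥0∞) / ((b + 1 : ℕ) : ℝ≥0∞) = ENNReal.ofReal (1 / ((b+1 : ℕ) : ℝ)) by
        rw [ENNReal.ofReal_div_of_pos (by positivity), ENNReal.ofReal_one, ENNReal.ofReal_natCast],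
      show (1 : ℝ≥0∞) / (m : ℝ≥0∞) = ENNReal.ofReal (1 / (m : ℝ)) by
        rw [ENNReal.ofReal_div_of_pos (by exact_mod_cast hm)]; simp]
  rw [← ENNReal.ofReal_mul (by positivity), ← ENNReal.ofReal_mul (by positivity),
      ← ENNReal.ofReal_mul (by positivity), ← ENNReal.ofReal_add (by positivity) (by positivity)]
  congr 1
  have hmr : (0:ℝ) < m := by exact_mod_cast hm
  have e1 : ((b+1).factorial : ℝ) = (b+1) * b.factorial := by
    rw [Nat.factorial_succ]; push_cast; ring
  have e2 : ((m + (b+1)).factorial : ℝ) = (m+b+1) * (m+b).factorial := by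
    rw [show m + (b+1) = (m+b)+1 by ring, Nat.factorial_succ]; push_cast; ring
  rw [e1, e2]
  have f1 : (b.factorial : ℝ) ≠ 0 := by exact_mod_cast b.factorial_ne_zero
  have f2 : ((m+b).factorial : ℝ) ≠ 0 := by exact_mod_cast (m+b).factorial_ne_zero
  have f3 : (0:ℝ) < (b:ℝ) + 1 := by positivity
  have f4 : (0:ℝ) < (m:ℝ) + b + 1 := by positivity
  field_simp
  push_cast
  ring

lemma C_le (m b : ℕ) (hm : 1 ≤ m) : C m b ≤ (m : ℝ≥0∞) / ((b : ℝ≥0∞) + 1) := by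
  obtain ⟨m', rfl⟩ : ∃ m', m = m' + 1 := ⟨m - 1, by omega⟩
  have hnat : (m'+1).factorial * b.factorial * (b + 1) ≤ (m'+1) * (m'+1 + b).factorial := by
    have h1 : m'.factorial * (b + 1).factorial ≤ (m'+1 + b).factorial := by
      have hd := Nat.factorial_mul_factorial_dvd_factorial_add m' (b + 1)
      have he : m' + (b + 1) = m'+1 + b := by omega
      rw [he] at hd
      exact Nat.le_of_dvd (Nat.factorial_pos _) hd
    calc (m'+1).factorial * b.factorial * (b + 1)
        = (m'+1) * (m'.factorial * (b+1).factorial) := by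
          rw [Nat.factorial_succ, Nat.factorial_succ]; ring
      _ ≤ (m'+1) * (m'+1 + b).factorial := Nat.mul_le_mul_left _ h1
  rw [C_eq_ofReal]
  have h2 : ((m'+1 : ℕ) : ℝ≥0∞) / ((b : ℝ≥0∞) + 1) = ENNReal.ofReal ((m'+1 : ℕ) / ((b:ℝ)+1)) := by
    rw [ENNReal.ofReal_div_of_pos (by positivity)]
    simp [ENNReal.ofReal_add]
  rw [h2]
  apply ENNReal.ofReal_le_ofReal
  rw [div_le_div_iff₀ (by positivity) (by positivity)]
  exact_mod_cast hnat

def gtEquiv (n : ℕ) : ℕ ≃ {b : ℕ // n < b} where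
  toFun j := ⟨n + 1 + j, by omega⟩
  invFun b := b.1 - (n + 1)
  left_inv j := by show n + 1 + j - (n + 1) = j; omega
  right_inv b := by ext; show n + 1 + (b.1 - (n + 1)) = b.1; have := b.2; omega

lemma partial_sum (m n N : ℕ) (hm : 1 ≤ m) :
    (∑ j ∈ Finset.range N, (1 / ((n + 1 + j : ℕ) : ℝ≥0∞)) * C m (n + 1 + j))
      + (1 / (m : ℝ≥0∞)) * C m (n + N) = (1 / (m : ℝ≥0∞)) * C m n := by
  induction N with
  | zero => simp
  | succ N ih =>
    rw [Finset.sum_range_succ, add_assoc]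
    rw [show n + (N+1) = (n + N) + 1 by omega, show n + 1 + N = (n + N) + 1 by omega]
    rw [show (((n + N) + 1 : ℕ) : ℝ≥0∞) = ((n + N : ℕ) : ℝ≥0∞) + 1 by push_cast; ring]
    rw [key_id m (n + N) hm]
    exact ih

lemma telescope (m n : ℕ) (hm : 1 ≤ m) :
    ∑' b : {b : ℕ // n < b}, (1 / (b.1 : ℝ≥0∞)) * C m b.1 = (1 / (m : ℝ≥0∞)) * C m n := by
  rw [← (gtEquiv n).tsum_eq]
  simp only [gtEquiv, Equiv.coe_fn_mk]
  rw [ENNReal.tsum_eq_iSup_nat]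
  have hinv : (1 / (m : ℝ≥0∞)) ≤ 1 := by
    apply ENNReal.div_le_of_le_mul
    simpa using (Nat.one_le_cast.mpr hm : (1:ℝ≥0∞) ≤ m)
  apply le_antisymm
  · apply iSup_le
    intro N
    calc (∑ j ∈ Finset.range N, (1 / ((n + 1 + j : ℕ) : ℝ≥0∞)) * C m (n + 1 + j))
        ≤ _ + (1 / (m : ℝ≥0∞)) * C m (n + N) := le_self_add
      _ = (1 / (m : ℝ≥0∞)) * C m n := partial_sum m n N hm
  · apply ENNReal.le_of_forall_pos_le_add
    intro ε hε _
    set N : ℕ := ⌈(m : ℝ≥0) / ε⌉₊ with hNdef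
    have hne : (((n + N : ℕ) : ℝ≥0∞) + 1) ≠ 0 := by simp
    have h1 : (m : ℝ≥0) ≤ ε * N := by
      have hle := Nat.le_ceil ((m : ℝ≥0) / ε)
      calc (m : ℝ≥0) = ε * ((m : ℝ≥0) / ε) := by
            rw [mul_div_cancel₀ _ hε.ne']
        _ ≤ ε * N := by gcongr
    have hNε : (m : ℝ≥0∞) / (((n + N : ℕ) : ℝ≥0∞) + 1) ≤ (ε : ℝ≥0∞) := by
      rw [ENNReal.div_le_iff hne (by simp)]
      calc (m : ℝ≥0∞) ≤ (ε : ℝ≥0∞) * N := by exact_mod_cast h1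
        _ ≤ (ε : ℝ≥0∞) * (((n + N : ℕ) : ℝ≥0∞) + 1) := by
            gcongr
            push_cast
            calc (N : ℝ≥0∞) ≤ (n : ℝ≥0∞) + N := le_add_self
              _ ≤ (n : ℝ≥0∞) + N + 1 := le_self_add
    calc (1 / (m : ℝ≥0∞)) * C m n
        = (∑ j ∈ Finset.range N, (1 / ((n + 1 + j : ℕ) : ℝ≥0∞)) * C m (n + 1 + j))
            + (1 / (m : ℝ≥0∞)) * C m (n + N) := (partial_sum m n N hm).symm
      _ ≤ (⨆ i : ℕ, ∑ j ∈ Finset.range i, (1 / ((n + 1 + j : ℕ) : ℝ≥0∞)) * C m (n + 1 + j))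
            + (ε : ℝ≥0∞) := by
          gcongr
          · exact le_iSup (fun i => ∑ j ∈ Finset.range i,
              (1 / ((n + 1 + j : ℕ) : ℝ≥0∞)) * C m (n + 1 + j)) N
          · calc (1 / (m : ℝ≥0∞)) * C m (n + N) ≤ 1 * C m (n + N) := by gcongr
              _ = C m (n + N) := one_mul _
              _ ≤ (m : ℝ≥0∞) / (((n + N : ℕ) : ℝ≥0∞) + 1) := C_le m (n + N) hm
              _ ≤ (ε : ℝ≥0∞) := hNε


lemma lastOr0_succ {r : ℕ} (m : Fin (r+1) → ℕ) : lastOr0 m = m (Fin.last r) := by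
  simp only [lastOr0, Nat.succ_sub_one, dif_pos (Nat.succ_pos r)]
  rfl

lemma lastOr0_snoc {r : ℕ} (m : Fin r → ℕ) (b : ℕ) :
    lastOr0 (Fin.snoc m b : Fin (r+1) → ℕ) = b := by
  rw [lastOr0_succ, Fin.snoc_last]

lemma lastOr0_zero (m : Fin 0 → ℕ) : lastOr0 m = 0 := rfl

lemma lastOr0_pos {r : ℕ} (m : StrictTup (r+1)) : 0 < lastOr0 m.1 := by
  rw [lastOr0_succ]; exact m.2.2 _

def initTup {r : ℕ} (m : StrictTup (r+1)) : StrictTup r :=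
  ⟨Fin.init m.1, fun i j h => m.2.1 (by simpa using h), fun i => m.2.2 _⟩

lemma lastOr0_init_lt {r : ℕ} (m : StrictTup (r+1)) :
    lastOr0 (initTup m).1 < m.1 (Fin.last r) := by
  cases r with
  | zero => rw [lastOr0_zero]; exact m.2.2 _
  | succ r' =>
      rw [lastOr0_succ]
      exact m.2.1 (by simp [Fin.castSucc_lt_last])

lemma lastOr0_of_pos {r : ℕ} (hr : 0 < r) (m : Fin r → ℕ) :
    lastOr0 m = m ⟨r - 1, by omega⟩ := by
  simp only [lastOr0, dif_pos hr]

def snocTup {r : ℕ} (n : StrictTup r) (b : ℕ) (hb : lastOr0 n.1 < b) : StrictTup (r+1) :=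
  ⟨Fin.snoc n.1 b, by
    rw [Fin.strictMono_iff_lt_succ]
    intro i
    simp only [Fin.snoc_castSucc]
    rcases Nat.lt_or_ge (i.1 + 1) r with h | h
    · have hsucc : (i.succ : Fin (r+1)) = Fin.castSucc ⟨i.1 + 1, h⟩ := by
        apply Fin.ext; rfl
      rw [hsucc, Fin.snoc_castSucc]
      exact n.2.1 (show i < ⟨i.1 + 1, h⟩ from Nat.lt_succ_self _)
    · have hieq : i.1 = r - 1 := by omega
      have hsucc : (i.succ : Fin (r+1)) = Fin.last r := by
        apply Fin.ext; simp; omega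
      rw [hsucc, Fin.snoc_last]
      have : n.1 i = lastOr0 n.1 := by
        rw [lastOr0_of_pos (by omega : 0 < r)]
        have hi2 : i = (⟨r - 1, by omega⟩ : Fin r) := Fin.ext hieq
        rw [← hi2]
      omega,
   by
    intro i
    refine Fin.lastCases ?_ ?_ i
    · rw [Fin.snoc_last]; omega
    · intro j; rw [Fin.snoc_castSucc]; exact n.2.2 j⟩

lemma initTup_snocTup {r : ℕ} (n : StrictTup r) (b : ℕ) (hb : lastOr0 n.1 < b) :
    initTup (snocTup n b hb) = n := by
  apply Subtype.ext
  funext i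
  simp [initTup, snocTup, Fin.init]

def snocEquiv (r : ℕ) : (Σ n : StrictTup r, {b : ℕ // lastOr0 n.1 < b}) ≃ StrictTup (r+1) where
  toFun p := snocTup p.1 p.2.1 p.2.2
  invFun m := ⟨initTup m, m.1 (Fin.last r), lastOr0_init_lt m⟩
  left_inv p := by
    rcases p with ⟨n, b, hb⟩
    dsimp only
    have h1 : initTup (snocTup n b hb) = n := initTup_snocTup n b hb
    refine Sigma.ext h1 ((Subtype.heq_iff_coe_eq fun x => by dsimp only; rw [h1]).mpr ?_)
    show (Fin.snoc n.1 b : Fin (r+1) → ℕ) (Fin.last r) = b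
    simp
  right_inv m := by
    apply Subtype.ext
    show Fin.snoc (Fin.init m.1) (m.1 (Fin.last r)) = m.1
    exact Fin.snoc_init_self m.1

instance : Unique (StrictTup 0) where
  default := ⟨fun i => i.elim0, fun i => i.elim0, fun i => i.elim0⟩
  uniq m := Subtype.ext (funext fun i => i.elim0)

def S' {r : ℕ} (k : Fin r → ℕ) (m : Fin r → ℕ) : ℝ≥0∞ := ∏ i, 1 / (m i : ℝ≥0∞) ^ (k i)

def Z' {r s : ℕ} (k : Fin r → ℕ) (l : Fin s → ℕ) : ℝ≥0∞ :=
  ∑' p : StrictTup r × StrictTup s,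
    S' k p.1.1 * S' l p.2.1 * C (lastOr0 p.1.1) (lastOr0 p.2.1)


lemma connSumC_eq (K L : List ℕ) : connSumC K L = Z' K.get L.get := rfl

lemma Z'_symm {r s : ℕ} (k : Fin r → ℕ) (l : Fin s → ℕ) : Z' k l = Z' l k := by
  rw [Z', Z', ← (Equiv.prodComm (StrictTup s) (StrictTup r)).tsum_eq]
  refine tsum_congr fun p => ?_
  simp only [Equiv.prodComm_apply, Prod.fst_swap, Prod.snd_swap]
  rw [C_comm]
  ring

lemma Z'_congr {r r' : ℕ} (h : r = r') {k : Fin r → ℕ} {k' : Fin r' → ℕ}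
    (hk : ∀ i : Fin r, k i = k' (Fin.cast h i)) {s : ℕ} (l : Fin s → ℕ) :
    Z' k l = Z' k' l := by
  subst h
  have : k = k' := funext fun i => hk i
  rw [this]

lemma S'_snoc_succ {r : ℕ} (k : Fin r → ℕ) (c : ℕ) (m : Fin (r+1) → ℕ) :
    S' (Fin.snoc k (c+1)) m = S' (Fin.snoc k c) m * (1 / (m (Fin.last r) : ℝ≥0∞)) := by
  rw [S', S', Fin.prod_univ_castSucc, Fin.prod_univ_castSucc]
  simp only [Fin.snoc_castSucc, Fin.snoc_last]
  rw [mul_assoc]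
  congr 1
  rw [pow_succ, one_div, one_div, one_div,
      ENNReal.mul_inv (Or.inr (by simp)) (Or.inl (by simp [ENNReal.pow_eq_top_iff]))]

lemma S'_snoc {s : ℕ} (l : Fin s → ℕ) (c : ℕ) (n : Fin s → ℕ) (b : ℕ) :
    S' (Fin.snoc l c) (Fin.snoc n b : Fin (s+1) → ℕ) = S' l n * (1 / (b : ℝ≥0∞) ^ c) := by
  rw [S', S', Fin.prod_univ_castSucc]
  simp only [Fin.snoc_castSucc, Fin.snoc_last]

lemma Z'_transfer {r s : ℕ} (k : Fin r → ℕ) (c : ℕ) (l : Fin s → ℕ) :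
    Z' (Fin.snoc k (c+1) : Fin (r+1) → ℕ) l
      = Z' (Fin.snoc k c : Fin (r+1) → ℕ) (Fin.snoc l 1 : Fin (s+1) → ℕ) := by
  rw [Z', Z', ENNReal.tsum_prod', ENNReal.tsum_prod']
  refine tsum_congr fun m => ?_
  rw [← (snocEquiv s).tsum_eq, ENNReal.tsum_sigma']
  refine tsum_congr fun n => ?_
  -- RHS inner sum over b
  have hM : 1 ≤ lastOr0 m.1 := lastOr0_pos m
  calc S' (Fin.snoc k (c+1)) m.1 * S' l n.1 * C (lastOr0 m.1) (lastOr0 n.1)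
      = (S' (Fin.snoc k c) m.1 * S' l n.1) *
          ((1 / (lastOr0 m.1 : ℝ≥0∞)) * C (lastOr0 m.1) (lastOr0 n.1)) := by
        rw [S'_snoc_succ, lastOr0_succ m.1]
        ring
    _ = (S' (Fin.snoc k c) m.1 * S' l n.1) *
          ∑' b : {b : ℕ // lastOr0 n.1 < b}, (1 / (b.1 : ℝ≥0∞)) * C (lastOr0 m.1) b.1 := by
        rw [telescope _ _ hM]
    _ = ∑' b : {b : ℕ // lastOr0 n.1 < b},
          S' (Fin.snoc k c) m.1 * S' (Fin.snoc l 1) ((snocEquiv s) ⟨n, b⟩).1 *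
            C (lastOr0 m.1) (lastOr0 ((snocEquiv s) ⟨n, b⟩).1) := by
        rw [← ENNReal.tsum_mul_left]
        refine tsum_congr fun b => ?_
        have h1 : ((snocEquiv s) ⟨n, b⟩).1 = Fin.snoc n.1 b.1 := rfl
        rw [h1, lastOr0_snoc, S'_snoc]
        rw [pow_one]
        ring

lemma get_concat (A : List ℕ) (c : ℕ) (i : Fin (A ++ [c]).length) :
    (A ++ [c]).get i
      = (Fin.snoc A.get c : Fin (A.length + 1) → ℕ) (Fin.cast (by simp : (A ++ [c]).length = A.length + 1) i) := by
  rcases Nat.lt_or_ge i.1 A.length with h | h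
  · have h1 : (A ++ [c]).get i = A.get ⟨i.1, h⟩ := List.getElem_append_left h
    have h2 : (Fin.cast (by simp : (A ++ [c]).length = A.length + 1) i)
        = Fin.castSucc ⟨i.1, h⟩ := rfl
    rw [h1, h2, Fin.snoc_castSucc]
  · have hi : i.1 = A.length := by have := i.2; simp at this; omega
    have h1 : (A ++ [c]).get i = c := by
      show (A ++ [c])[i.1] = c
      simp [hi]
    have h2 : (Fin.cast (by simp : (A ++ [c]).length = A.length + 1) i)
        = Fin.last A.length := Fin.ext hi
    rw [h1, h2, Fin.snoc_last]

lemma bridgeL (A : List ℕ) (c : ℕ) (L : List ℕ) :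
    connSumC (A ++ [c]) L = Z' (Fin.snoc A.get c : Fin (A.length + 1) → ℕ) L.get := by
  rw [connSumC_eq]
  exact Z'_congr (by simp) (fun i => get_concat A c i) L.get

lemma connSumC_comm (K L : List ℕ) : connSumC K L = connSumC L K := by
  rw [connSumC_eq, connSumC_eq, Z'_symm]

lemma bridgeLR (A : List ℕ) (c : ℕ) (B : List ℕ) (d : ℕ) :
    connSumC (A ++ [c]) (B ++ [d])
      = Z' (Fin.snoc A.get c : Fin (A.length + 1) → ℕ)
          (Fin.snoc B.get d : Fin (B.length + 1) → ℕ) := by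
  rw [connSumC_comm, bridgeL, Z'_symm]
  exact Z'_congr (by simp) (fun i => get_concat A c i) _

lemma stepA (K L : List ℕ) (c : ℕ) :
    connSumC (K ++ [c + 1]) L = connSumC (K ++ [c]) (L ++ [1]) := by
  rw [bridgeL, bridgeLR, Z'_transfer]

lemma stepB (K L : List ℕ) (c : ℕ) :
    connSumC (K ++ [1]) (L ++ [c]) = connSumC K (L ++ [c + 1]) := by
  rw [connSumC_comm, ← stepA L K c, connSumC_comm]

lemma stepA_iter (K : List ℕ) (c j : ℕ) :
    ∀ L, connSumC (K ++ [c + j]) L = connSumC (K ++ [c]) (L ++ List.replicate j 1) := by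
  induction j with
  | zero => intro L; simp
  | succ j ih =>
      intro L
      rw [show c + (j + 1) = (c + j) + 1 by omega, stepA, ih (L ++ [1])]
      congr 1
      rw [List.append_assoc, List.replicate_succ]
      rfl

lemma stepB_iter (L : List ℕ) (c j : ℕ) :
    ∀ K, connSumC (K ++ List.replicate j 1) (L ++ [c]) = connSumC K (L ++ [c + j]) := by
  induction j with
  | zero => intro K; simp
  | succ j ih =>
      intro K
      have h1 : K ++ List.replicate (j + 1) 1 = (K ++ [1]) ++ List.replicate j 1 := by
        rw [List.append_assoc, List.replicate_succ]
        rfl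
      rw [h1, ih (K ++ [1]), stepB, Nat.add_assoc]


lemma chain : ∀ (ab : List (ℕ × ℕ)), (∀ p ∈ ab, 0 < p.1 ∧ 0 < p.2) → ∀ L : List ℕ,
    connSumC (indexFromAB ab) L = connSumC [] (L ++ dualFromAB ab) := by
  intro ab
  induction ab using List.reverseRecOn with
  | nil => intro _ L; simp [indexFromAB, dualFromAB]
  | append_singleton ab' q ih =>
      intro hpos L
      obtain ⟨a, b⟩ := q
      have ha : 0 < a := (hpos (a, b) (by simp)).1
      have hb : 0 < b := (hpos (a, b) (by simp)).2
      have hI : indexFromAB (ab' ++ [(a, b)])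
          = (indexFromAB ab' ++ List.replicate (a - 1) 1) ++ [1 + b] := by
        rw [indexFromAB, List.flatMap_append]
        simp [indexFromAB, List.append_assoc, Nat.add_comm 1 b]
      have hD : dualFromAB (ab' ++ [(a, b)])
          = (List.replicate (b - 1) 1 ++ [a + 1]) ++ dualFromAB ab' := by
        rw [dualFromAB, List.reverse_append]
        simp [dualFromAB]
      rw [hI, hD, stepA_iter _ 1 b L]
      have h2 : (indexFromAB ab' ++ List.replicate (a - 1) 1) ++ [1]
          = indexFromAB ab' ++ List.replicate a 1 := by
        rw [List.append_assoc, ← List.replicate_succ' (n := a - 1) (a := 1)]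
        congr 2
        omega
      have h3 : L ++ List.replicate b 1 = (L ++ List.replicate (b - 1) 1) ++ [1] := by
        rw [List.append_assoc, ← List.replicate_succ' (n := b - 1) (a := 1)]
        congr 2
        omega
      rw [h2, h3, stepB_iter _ 1 a, ih (fun p hp => hpos p (by simp [hp])) _]
      congr 1
      simp [List.append_assoc, Nat.add_comm 1 a]

lemma connSumC_nil_right (K : List ℕ) : connSumC K [] = mzeta K := by
  haveI : Unique (StrictTup ([] : List ℕ).length) := inferInstanceAs (Unique (StrictTup 0))
  rw [connSumC, mzeta,
    ← (Equiv.prodUnique (StrictTup K.length) (StrictTup ([] : List ℕ).length)).symm.tsum_eq]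
  refine tsum_congr fun m => ?_
  rw [Equiv.prodUnique_symm_apply]
  show (∏ i, 1 / ((m.1 i : ℝ≥0∞)) ^ K.get i) * (∏ j : Fin 0, (1:ℝ≥0∞)) *
      C (lastOr0 m.1) (lastOr0 (default : StrictTup 0).1) = _
  rw [lastOr0_zero, C_zero_right]
  simp

lemma connSumC_nil_left (K : List ℕ) : connSumC [] K = mzeta K := by
  rw [connSumC_comm, connSumC_nil_right]


end CSD

/-- **Classical connected sum duality.**  For an admissible index `k` with dual `k†`,
`Z(k; ∅) = Z(∅; k†)`; moreover `Z(k; ∅) = ζ(k)` and `Z(∅; k†) = ζ(k†)`, so that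
`ζ(k) = ζ(k†)`. -/
theorem connSumC_duality (ab : List (ℕ × ℕ)) (hab : ab ≠ [])
    (hpos : ∀ p ∈ ab, 0 < p.1 ∧ 0 < p.2) :
    connSumC (indexFromAB ab) [] = connSumC [] (dualFromAB ab) ∧
    connSumC (indexFromAB ab) [] = mzeta (indexFromAB ab) ∧
    connSumC [] (dualFromAB ab) = mzeta (dualFromAB ab) := by
  refine ⟨?_, CSD.connSumC_nil_right _, CSD.connSumC_nil_left _⟩
  simpa using CSD.chain ab hpos []

end
end
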